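/- arXiv:2111.09376 — 7 statements merged into one kernel-verified Lean document; each statement's English description precedes it below -/
import Mathlib

section
/- Let c and n be positive integers. Every finite undirected graph on n vertices with strictly more than (c-1)(n-1) edges contains a non-trivial c-edge-connected component, that is, a set C of at least two vertices whose induced subgraph is c-edge-connected. -/
open SimpleGraph

/-- The set of edges of `G` with exactly one endpoint in `A`: the edges of the
cut `(A, Aᶜ)`, also known as the boundary `∂_G(A)`. -/
def cutEdges {V : Type*} (G : SimpleGraph V) (A : Set V) : Set (Sym2 V) :=
  {e | e ∈ G.edgeSet ∧ ∃ u v, e = s(u, v) ∧ u ∈ A ∧ v ∉ A}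

/-- `G` is `c`-edge-connected: every cut of `G` has at least `c` edges.
(In particular a one-vertex graph is `c`-edge-connected.) -/
def IsCEdgeConn {V : Type*} (G : SimpleGraph V) (c : ℕ) : Prop :=
  ∀ A : Set V, A.Nonempty → Aᶜ.Nonempty → c ≤ (cutEdges G A).ncard

/-- `C` is (the vertex set of) a `c`-edge-connected component of `G`:
a maximal set of vertices whose induced subgraph is `c`-edge-connected. -/
def IsCComp {V : Type*} (G : SimpleGraph V) (c : ℕ) (C : Set V) : Prop :=
  C.Nonempty ∧ IsCEdgeConn (G.induce C) c ∧
    ∀ D : Set V, C ⊆ D → IsCEdgeConn (G.induce D) c → D = C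

/-- `u` and `v` are `c`-edge-connected in `G`: there exist `c` pairwise
edge-disjoint paths from `u` to `v`. -/
def CEdgeConnPair {V : Type*} (G : SimpleGraph V) (c : ℕ) (u v : V) : Prop :=
  ∃ P : Fin c → G.Walk u v, (∀ i, (P i).IsPath) ∧
    ∀ i j : Fin c, i ≠ j → ∀ e ∈ (P i).edges, e ∉ (P j).edges

/-- Edges of `G` with both endpoints in `A`. -/
def edgesIn {V : Type*} (G : SimpleGraph V) (A : Set V) : Set (Sym2 V) :=
  {e | e ∈ G.edgeSet ∧ ∃ u v, e = s(u, v) ∧ u ∈ A ∧ v ∈ A}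

lemma key {V : Type*} [Fintype V] (c : ℕ) :
    ∀ n : ℕ, ∀ G : SimpleGraph V, ∀ A : Set V, A.ncard = n →
    (c - 1) * (n - 1) < (edgesIn G A).ncard →
    ∃ C : Set V, C ⊆ A ∧ 2 ≤ C.ncard ∧ IsCEdgeConn (G.induce C) c := by
  intro n
  induction n using Nat.strong_induction_on with
  | _ n IH =>
  intro G A hA hE
  by_cases hcc : IsCEdgeConn (G.induce A) c
  · refine ⟨A, subset_rfl, ?_, hcc⟩
    obtain ⟨e, he⟩ : (edgesIn G A).Nonempty := by
      rw [Set.nonempty_iff_ne_empty]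
      intro h
      rw [h, Set.ncard_empty] at hE
      omega
    obtain ⟨heE, u, v, rfl, hu, hv⟩ := he
    have hne : u ≠ v := (G.mem_edgeSet.mp heE).ne
    have hsub : ({u, v} : Set V) ⊆ A := by
      rintro x (rfl | rfl) <;> assumption
    calc 2 = ({u, v} : Set V).ncard := (Set.ncard_pair hne).symm
    _ ≤ A.ncard := Set.ncard_le_ncard hsub A.toFinite
  · unfold IsCEdgeConn at hcc
    push_neg at hcc
    obtain ⟨B, hB, hBc, hcut⟩ := hcc
    set A₁ : Set V := Subtype.val '' B with hA₁def
    set A₂ : Set V := A \ A₁ with hA₂def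
    have hA₁A : A₁ ⊆ A := by rintro _ ⟨b, _, rfl⟩; exact b.2
    have hA₂A : A₂ ⊆ A := Set.diff_subset
    have hA₁ne : A₁.Nonempty := hB.image _
    have hA₂ne : A₂.Nonempty := by
      obtain ⟨b, hb⟩ := hBc
      refine ⟨b, b.2, fun h => hb ?_⟩
      obtain ⟨b', hb', heq⟩ := h
      rwa [← show b' = b from Subtype.val_injective heq]
    have hsum : A₁.ncard + A₂.ncard = n := by
      rw [← hA, hA₂def]
      rw [Set.ncard_diff hA₁A]
      have := Set.ncard_le_ncard hA₁A A.toFinite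
      omega
    have h1pos : 1 ≤ A₁.ncard := (Set.ncard_pos A₁.toFinite).mpr hA₁ne
    have h2pos : 1 ≤ A₂.ncard := (Set.ncard_pos A₂.toFinite).mpr hA₂ne
    have hsub : edgesIn G A ⊆
        edgesIn G A₁ ∪ edgesIn G A₂ ∪ Sym2.map Subtype.val '' (cutEdges (G.induce A) B) := by
      rintro e ⟨heE, u, v, rfl, hu, hv⟩
      have hadj : G.Adj u v := G.mem_edgeSet.mp heE
      by_cases hu1 : u ∈ A₁ <;> by_cases hv1 : v ∈ A₁
      · exact Or.inl (Or.inl ⟨heE, u, v, rfl, hu1, hv1⟩)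
      · refine Or.inr ⟨s(⟨u, hu⟩, ⟨v, hv⟩), ⟨?_, ⟨u, hu⟩, ⟨v, hv⟩, rfl, ?_, ?_⟩, rfl⟩
        · exact hadj
        · obtain ⟨b, hb, heq⟩ := hu1
          rwa [← show b = ⟨u, hu⟩ from Subtype.val_injective heq]
        · exact fun h => hv1 ⟨_, h, rfl⟩
      · refine Or.inr ⟨s(⟨v, hv⟩, ⟨u, hu⟩), ⟨?_, ⟨v, hv⟩, ⟨u, hu⟩, rfl, ?_, ?_⟩, ?_⟩
        · exact hadj.symm
        · obtain ⟨b, hb, heq⟩ := hv1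
          rwa [← show b = ⟨v, hv⟩ from Subtype.val_injective heq]
        · exact fun h => hu1 ⟨_, h, rfl⟩
        · exact Sym2.eq_swap
      · exact Or.inl (Or.inr ⟨heE, u, v, rfl, ⟨hu, hu1⟩, ⟨hv, hv1⟩⟩)
    have hcount : (edgesIn G A).ncard ≤
        (edgesIn G A₁).ncard + (edgesIn G A₂).ncard + (c - 1) := by
      have himg : (Sym2.map (Subtype.val : ↥A → V) '' (cutEdges (G.induce A) B)).ncard
          ≤ c - 1 := by
        have := Set.ncard_image_le (s := cutEdges (G.induce A) B)
          (f := Sym2.map (Subtype.val : ↥A → V)) (Set.toFinite _)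
        omega
      calc (edgesIn G A).ncard
          ≤ (edgesIn G A₁ ∪ edgesIn G A₂ ∪
              Sym2.map Subtype.val '' (cutEdges (G.induce A) B)).ncard :=
            Set.ncard_le_ncard hsub (Set.toFinite _)
        _ ≤ (edgesIn G A₁ ∪ edgesIn G A₂).ncard +
              (Sym2.map Subtype.val '' (cutEdges (G.induce A) B)).ncard :=
            Set.ncard_union_le _ _
        _ ≤ (edgesIn G A₁).ncard + (edgesIn G A₂).ncard + (c - 1) := by
            have := Set.ncard_union_le (edgesIn G A₁) (edgesIn G A₂)
            omega
    rcases lt_or_ge ((c - 1) * (A₁.ncard - 1)) (edgesIn G A₁).ncard with h | h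
    · obtain ⟨C, hC, h2, hccC⟩ := IH A₁.ncard (by omega) G A₁ rfl h
      exact ⟨C, hC.trans hA₁A, h2, hccC⟩
    · have h2' : (c - 1) * (A₂.ncard - 1) < (edgesIn G A₂).ncard := by
        by_contra h2'
        push_neg at h2'
        have hkey : (c - 1) * (A₁.ncard - 1) + (c - 1) * (A₂.ncard - 1) + (c - 1)
            = (c - 1) * (n - 1) := by
          have heq : (A₁.ncard - 1) + (A₂.ncard - 1) + 1 = n - 1 := by omega
          calc (c - 1) * (A₁.ncard - 1) + (c - 1) * (A₂.ncard - 1) + (c - 1)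
              = (c - 1) * ((A₁.ncard - 1) + (A₂.ncard - 1) + 1) := by ring
            _ = (c - 1) * (n - 1) := by rw [heq]
        have : (edgesIn G A).ncard ≤ (c - 1) * (n - 1) := by
          calc (edgesIn G A).ncard
              ≤ (edgesIn G A₁).ncard + (edgesIn G A₂).ncard + (c - 1) := hcount
            _ ≤ (c - 1) * (A₁.ncard - 1) + (c - 1) * (A₂.ncard - 1) + (c - 1) :=
                Nat.add_le_add (Nat.add_le_add h h2') le_rfl
            _ = (c - 1) * (n - 1) := hkey
        omega
      obtain ⟨C, hC, h2, hccC⟩ := IH A₂.ncard (by omega) G A₂ rfl h2'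
      exact ⟨C, hC.trans hA₂A, h2, hccC⟩

lemma extend {V : Type*} [Fintype V] (G : SimpleGraph V) (c : ℕ) (C₀ : Set V)
    (h₀ : IsCEdgeConn (G.induce C₀) c) (h2 : 2 ≤ C₀.ncard) :
    ∃ C : Set V, IsCComp G c C ∧ 2 ≤ C.ncard := by
  set T : Set ℕ := {k | ∃ D : Set V, C₀ ⊆ D ∧ IsCEdgeConn (G.induce D) c ∧ D.ncard = k}
    with hT
  have hTne : T.Nonempty := ⟨C₀.ncard, C₀, subset_rfl, h₀, rfl⟩
  have hTb : BddAbove T := by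
    refine ⟨Fintype.card V, ?_⟩
    rintro k ⟨D, -, -, rfl⟩
    calc D.ncard ≤ (Set.univ : Set V).ncard :=
          Set.ncard_le_ncard (Set.subset_univ D) (Set.toFinite _)
      _ = Fintype.card V := by rw [Set.ncard_univ, Nat.card_eq_fintype_card]
  obtain ⟨D, hCD, hDc, hDcard⟩ := Nat.sSup_mem hTne hTb
  have hC₀ne : C₀.Nonempty := by
    rw [Set.nonempty_iff_ne_empty]
    intro h
    rw [h, Set.ncard_empty] at h2
    omega
  refine ⟨D, ⟨hC₀ne.mono hCD, hDc, ?_⟩, h2.trans (Set.ncard_le_ncard hCD D.toFinite)⟩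
  intro E hDE hEc
  have hEmem : E.ncard ∈ T := ⟨E, hCD.trans hDE, hEc, rfl⟩
  have hle : E.ncard ≤ D.ncard := hDcard ▸ le_csSup hTb hEmem
  exact (Set.eq_of_subset_of_ncard_le hDE hle E.toFinite).symm

/-- Benczúr–Karger: every graph on `n ≥ 1` vertices with strictly more
than `(c-1)(n-1)` edges contains a non-trivial `c`-edge-connected component. -/
theorem stmt0 {V : Type*} [Fintype V] (c : ℕ) (hc : 0 < c)
    (hn : 0 < Fintype.card V) (G : SimpleGraph V)
    (hm : (c - 1) * (Fintype.card V - 1) < G.edgeSet.ncard) :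
    ∃ C : Set V, IsCComp G c C ∧ 2 ≤ C.ncard := by
  have huniv : edgesIn G Set.univ = G.edgeSet := by
    ext e
    constructor
    · exact fun h => h.1
    · intro h
      exact ⟨h, Sym2.ind (fun u v _ => ⟨u, v, rfl, trivial, trivial⟩) e h⟩
  obtain ⟨C, hCA, h2, hconn⟩ := key c (Fintype.card V) G Set.univ (by rw [Set.ncard_univ, Nat.card_eq_fintype_card])
    (by rw [huniv]; exact hm)
  exact extend G c C hconn h2
end

section
/- Let c be a positive integer and G a finite undirected graph on n vertices, and let q_c denote the number of c-edge-connected components of G. Then the number of edges of G whose two endpoints lie in distinct c-edge-connected components of G is at most (c-1)(q_c - 1). -/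
open SimpleGraph

/-!
Let `P` be a family of `c`-edge-connected components with union `W`. If `|P| ≥ 2`, then `G[W]` is
not `c`-edge-connected, since it would strictly contain a component; so some cut `(S, T)` of
`G[W]` has fewer than `c` edges. A `c`-edge-connected set cannot be split by such a cut, so every
component of `P` lies in `S` or in `T`, which splits `P` into two nonempty subfamilies. The edges
between components of `P` are those inside either subfamily plus at most `c - 1` edges of the cut,
and induction on `|P|` gives `(c - 1)(|PA| - 1) + (c - 1)(|PB| - 1) + (c - 1) = (c - 1)(|P| - 1)`.
-/

namespace SimpleGraph

variable {V : Type*} (G : SimpleGraph V)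

def crossEdges (S T : Set V) : Set (Sym2 V) :=
  {e | e ∈ G.edgeSet ∧ ∃ u v, e = s(u, v) ∧ u ∈ S ∧ v ∈ T}

def betweenEdges (P : Set (Set V)) : Set (Sym2 V) :=
  {e ∈ G.edgeSet | (∀ x ∈ e, x ∈ ⋃₀ P) ∧ ¬ ∃ C ∈ P, ∀ x ∈ e, x ∈ C}

variable {G}

lemma crossEdges_mono {S S' T T' : Set V} (hS : S ⊆ S') (hT : T ⊆ T') :
    G.crossEdges S T ⊆ G.crossEdges S' T' := by
  rintro e ⟨he, u, v, rfl, hu, hv⟩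
  exact ⟨he, u, v, rfl, hS hu, hT hv⟩

lemma image_cutEdges_induce (W : Set V) (A : Set W) :
    Sym2.map Subtype.val '' cutEdges (G.induce W) A
      = G.crossEdges (Subtype.val '' A) (Subtype.val '' Aᶜ) := by
  ext e
  constructor
  · rintro ⟨e', ⟨he, u, v, rfl, hu, hv⟩, rfl⟩
    exact ⟨by simpa using he, u, v, by simp, ⟨u, hu, rfl⟩, ⟨v, hv, rfl⟩⟩
  · rintro ⟨he, x, y, rfl, ⟨u, hu, rfl⟩, ⟨v, hv, rfl⟩⟩
    exact ⟨s(u, v), ⟨by simpa using he, u, v, rfl, hu, hv⟩, by simp⟩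

lemma ncard_cutEdges_induce (W : Set V) (A : Set W) :
    (cutEdges (G.induce W) A).ncard
      = (G.crossEdges (Subtype.val '' A) (Subtype.val '' Aᶜ)).ncard := by
  rw [← image_cutEdges_induce,
    Set.ncard_image_of_injective _ (Sym2.map.injective Subtype.val_injective)]

lemma exists_crossEdges_ncard_lt_of_not_isCEdgeConn {c : ℕ} {W : Set V}
    (hW : ¬ IsCEdgeConn (G.induce W) c) :
    ∃ S T : Set V, S.Nonempty ∧ T.Nonempty ∧ Disjoint S T ∧ W = S ∪ T ∧
      (G.crossEdges S T).ncard < c := by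
  simp only [IsCEdgeConn, not_forall, not_le, exists_prop] at hW
  obtain ⟨A, hA, hAc, hcut⟩ := hW
  refine ⟨_, _, hA.image _, hAc.image _, ?_, ?_, ncard_cutEdges_induce W A ▸ hcut⟩
  · exact Set.disjoint_image_of_injective Subtype.val_injective disjoint_compl_right
  · rw [← Set.image_union, Set.union_compl_self, Set.image_univ, Subtype.range_coe]

variable {c : ℕ}

lemma IsCEdgeConn.subset_or_subset [Finite V] {C S T : Set V}
    (hC : IsCEdgeConn (G.induce C) c) (hCST : C ⊆ S ∪ T) (hcut : (G.crossEdges S T).ncard < c) :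
    C ⊆ S ∨ C ⊆ T := by
  by_contra! h
  obtain ⟨⟨x, hxC, hxS⟩, ⟨y, hyC, hyT⟩⟩ := And.imp Set.not_subset.mp Set.not_subset.mp h
  let A : Set C := {z | ↑z ∈ S}
  have hA : A.Nonempty := ⟨⟨y, hyC⟩, (hCST hyC).resolve_right hyT⟩
  have hAc : Aᶜ.Nonempty := ⟨⟨x, hxC⟩, hxS⟩
  have hsub : G.crossEdges (Subtype.val '' A) (Subtype.val '' Aᶜ) ⊆ G.crossEdges S T :=
    crossEdges_mono (by rintro _ ⟨z, hz, rfl⟩; exact hz)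
      (by rintro _ ⟨z, hz, rfl⟩; exact (hCST z.2).resolve_left hz)
  have hcutC := ncard_cutEdges_induce C A ▸ hC A hA hAc
  exact (hcutC.trans (Set.ncard_le_ncard hsub)).not_gt hcut

lemma IsCComp.not_isCEdgeConn_of_ne {C₀ C₁ W : Set V} (h₀ : IsCComp G c C₀)
    (h₁ : IsCComp G c C₁) (hne : C₀ ≠ C₁) (h₀W : C₀ ⊆ W) (h₁W : C₁ ⊆ W) :
    ¬ IsCEdgeConn (G.induce W) c :=
  fun hW => hne ((h₀.2.2 W h₀W hW).symm.trans (h₁.2.2 W h₁W hW))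

lemma exists_partition_crossEdges_ncard_lt [Finite V] {P : Set (Set V)}
    (hP : ∀ C ∈ P, IsCComp G c C) (hP₂ : 1 < P.ncard) :
    ∃ PA PB : Set (Set V), P = PA ∪ PB ∧ Disjoint PA PB ∧ PA.Nonempty ∧ PB.Nonempty ∧
      (G.crossEdges (⋃₀ PA) (⋃₀ PB)).ncard < c := by
  obtain ⟨C₀, h₀, C₁, h₁, hne⟩ := (Set.one_lt_ncard (Set.toFinite P)).mp hP₂
  obtain ⟨S, T, ⟨s, hs⟩, ⟨t, ht⟩, hST, hW, hcut⟩ :=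
    exists_crossEdges_ncard_lt_of_not_isCEdgeConn <| (hP C₀ h₀).not_isCEdgeConn_of_ne
      (hP C₁ h₁) hne (Set.subset_sUnion_of_mem h₀) (Set.subset_sUnion_of_mem h₁)
  have hside (D) (hD : D ∈ P) : D ⊆ S ∨ D ⊆ T :=
    (hP D hD).2.1.subset_or_subset (hW ▸ Set.subset_sUnion_of_mem hD) hcut
  obtain ⟨Ds, hDs, hsDs⟩ : s ∈ ⋃₀ P := hW ▸ Or.inl hs
  obtain ⟨Dt, hDt, htDt⟩ : t ∈ ⋃₀ P := hW ▸ Or.inr ht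
  refine ⟨{D ∈ P | D ⊆ S}, {D ∈ P | D ⊆ T}, ?_, ?_,
    ⟨Ds, hDs, (hside Ds hDs).resolve_right fun h => hST.notMem_of_mem_left hs (h hsDs)⟩,
    ⟨Dt, hDt, (hside Dt hDt).resolve_left fun h => hST.notMem_of_mem_right ht (h htDt)⟩,
    (Set.ncard_le_ncard (crossEdges_mono (Set.sUnion_subset fun D hD => hD.2)
      (Set.sUnion_subset fun D hD => hD.2))).trans_lt hcut⟩
  · ext D
    exact ⟨fun hD => (hside D hD).imp (⟨hD, ·⟩) (⟨hD, ·⟩), fun h => h.elim (·.1) (·.1)⟩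
  · refine Set.disjoint_left.mpr fun D ⟨hD, hDS⟩ ⟨_, hDT⟩ => ?_
    obtain ⟨x, hx⟩ := (hP D hD).1
    exact hST.notMem_of_mem_left (hDS hx) (hDT hx)

lemma betweenEdges_eq_empty {P : Set (Set V)} (hP : P.Subsingleton) : G.betweenEdges P = ∅ := by
  refine Set.eq_empty_of_forall_notMem fun e ⟨_, hcov, hsep⟩ => ?_
  induction e using Sym2.ind with
  | _ u v =>
    obtain ⟨C, hC, hu⟩ := hcov u (Sym2.mem_mk_left u v)
    obtain ⟨C', hC', hv⟩ := hcov v (Sym2.mem_mk_right u v)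
    refine hsep ⟨C, hC, fun x hx => ?_⟩
    rcases Sym2.mem_iff.mp hx with rfl | rfl
    · exact hu
    · exact hP hC hC' ▸ hv

lemma betweenEdges_union_subset (PA PB : Set (Set V)) :
    G.betweenEdges (PA ∪ PB) ⊆
      G.betweenEdges PA ∪ G.betweenEdges PB ∪ G.crossEdges (⋃₀ PA) (⋃₀ PB) := by
  rintro e ⟨he, hcov, hsep⟩
  induction e using Sym2.ind with
  | _ u v =>
    simp only [Set.sUnion_union, Sym2.mem_iff, forall_eq_or_imp, forall_eq] at hcov
    have hsep' {Q} (hQ : Q ⊆ PA ∪ PB) : ¬ ∃ C ∈ Q, ∀ x ∈ s(u, v), x ∈ C :=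
      fun ⟨C, hC, h⟩ => hsep ⟨C, hQ hC, h⟩
    have hends {X : Set V} (hu : u ∈ X) (hv : v ∈ X) : ∀ x ∈ s(u, v), x ∈ X :=
      fun _ hx => (Sym2.mem_iff.mp hx).elim (· ▸ hu) (· ▸ hv)
    obtain ⟨hu | hu, hv | hv⟩ := hcov
    · exact Or.inl <| Or.inl ⟨he, hends hu hv, hsep' Set.subset_union_left⟩
    · exact Or.inr ⟨he, u, v, rfl, hu, hv⟩
    · exact Or.inr ⟨he, v, u, Sym2.eq_swap, hv, hu⟩
    · exact Or.inl <| Or.inr ⟨he, hends hu hv, hsep' Set.subset_union_right⟩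

theorem ncard_betweenEdges_le [Finite V] {P : Set (Set V)} (hP : ∀ C ∈ P, IsCComp G c C) :
    (G.betweenEdges P).ncard ≤ (c - 1) * (P.ncard - 1) := by
  induction h : P.ncard using Nat.strong_induction_on generalizing P with
  | _ n ih =>
  rcases le_or_gt n 1 with hn | hn
  · rw [betweenEdges_eq_empty (Set.ncard_le_one_iff_subsingleton.mp (h ▸ hn)), Set.ncard_empty]
    exact Nat.zero_le _
  obtain ⟨PA, PB, rfl, hdisj, hA, hB, hcut⟩ := exists_partition_crossEdges_ncard_lt hP (h ▸ hn)
  rw [Set.ncard_union_eq hdisj] at h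
  have hA₁ := hA.ncard_pos
  have hB₁ := hB.ncard_pos
  have ihA := ih _ (by omega) (fun C hC => hP C (Or.inl hC)) rfl
  have ihB := ih _ (by omega) (fun C hC => hP C (Or.inr hC)) rfl
  calc (G.betweenEdges (PA ∪ PB)).ncard
      ≤ (G.betweenEdges PA ∪ G.betweenEdges PB ∪ G.crossEdges (⋃₀ PA) (⋃₀ PB)).ncard :=
        Set.ncard_le_ncard (betweenEdges_union_subset PA PB)
    _ ≤ (G.betweenEdges PA).ncard + (G.betweenEdges PB).ncard +
          (G.crossEdges (⋃₀ PA) (⋃₀ PB)).ncard :=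
        (Set.ncard_union_le _ _).trans (Nat.add_le_add_right (Set.ncard_union_le _ _) _)
    _ ≤ (c - 1) * (PA.ncard - 1) + (c - 1) * (PB.ncard - 1) + (c - 1) := by gcongr; omega
    _ = (c - 1) * (n - 1) := by
        rw [show n - 1 = (PA.ncard - 1) + (PB.ncard - 1) + 1 by omega]
        ring

lemma isCEdgeConn_induce_singleton (v : V) : IsCEdgeConn (G.induce {v}) c := by
  rintro A ⟨a, ha⟩ ⟨b, hb⟩
  exact absurd (Subtype.ext (a.2.trans b.2.symm) ▸ ha) hb

lemma exists_isCComp_mem [Finite V] (v : V) : ∃ C, IsCComp G c C ∧ v ∈ C := by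
  obtain ⟨C, ⟨hvC, hC⟩, hmax⟩ := Set.Finite.exists_maximalFor id
    {D : Set V | v ∈ D ∧ IsCEdgeConn (G.induce D) c} (Set.toFinite _)
    ⟨{v}, rfl, isCEdgeConn_induce_singleton v⟩
  exact ⟨C, ⟨⟨v, hvC⟩, hC, fun D hCD hD => (hmax ⟨hCD hvC, hD⟩ hCD).antisymm hCD⟩, hvC⟩

end SimpleGraph

theorem stmt1_general {V : Type*} [Fintype V] (c : ℕ) (G : SimpleGraph V) :
    {e ∈ G.edgeSet | ¬ ∃ C : Set V, IsCComp G c C ∧ ∀ x ∈ e, x ∈ C}.ncard ≤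
      (c - 1) * ({C : Set V | IsCComp G c C}.ncard - 1) := by
  have hcover : ⋃₀ {C : Set V | IsCComp G c C} = Set.univ :=
    Set.eq_univ_of_forall fun v => (G.exists_isCComp_mem v).imp fun _ => id
  have hcross : {e ∈ G.edgeSet | ¬ ∃ C : Set V, IsCComp G c C ∧ ∀ x ∈ e, x ∈ C} =
      G.betweenEdges {C | IsCComp G c C} := by
    ext e
    simp [betweenEdges, hcover]
  exact hcross ▸ ncard_betweenEdges_le fun _ => id

/-- the number of edges joining distinct `c`-edge-connected components
of `G` is at most `(c-1)(q_c - 1)`, where `q_c` is the number of `c`-edge-connected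
components of `G`. -/
theorem stmt1 {V : Type*} [Fintype V] (c : ℕ) (hc : 0 < c) (G : SimpleGraph V) :
    {e ∈ G.edgeSet | ¬ ∃ C : Set V, IsCComp G c C ∧ ∀ x ∈ e, x ∈ C}.ncard ≤
      (c - 1) * ({C : Set V | IsCComp G c C}.ncard - 1) :=
  stmt1_general c G
end

section
/- Let c be a positive integer and let G = (V, E) be a finite undirected graph on n vertices such that at least 3n/4 of its vertices have degree at least 4c. Then the number of c-edge-connected components of G is at most 5n/6. -/
open SimpleGraph

namespace Stmt2Aux

open Set

variable {V : Type*}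

/-- Edges with one endpoint in `A` and the other in `B`. -/
def cross (G : SimpleGraph V) (A B : Set V) : Set (Sym2 V) :=
  {e | e ∈ G.edgeSet ∧ ∃ u v, e = s(u, v) ∧ u ∈ A ∧ v ∈ B}

lemma cross_symm (G : SimpleGraph V) (A B : Set V) : cross G A B = cross G B A := by
  ext e
  constructor <;> rintro ⟨he, u, v, rfl, hu, hv⟩ <;>
    exact ⟨he, v, u, Sym2.eq_swap, hv, hu⟩

lemma cross_mono (G : SimpleGraph V) {A B A' B' : Set V} (hA : A ⊆ A') (hB : B ⊆ B') :
    cross G A B ⊆ cross G A' B' := by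
  rintro e ⟨he, u, v, rfl, hu, hv⟩
  exact ⟨he, u, v, rfl, hA hu, hB hv⟩

/-- Unbundled form of `c`-edge-connectivity of the induced subgraph on `C`. -/
def Conn (G : SimpleGraph V) (c : ℕ) (C : Set V) : Prop :=
  ∀ A : Set V, A ⊆ C → A.Nonempty → (C \ A).Nonempty → c ≤ (cross G A (C \ A)).ncard

lemma image_cutEdges (G : SimpleGraph V) (C : Set V) (A' : Set ↥C) :
    Sym2.map (Subtype.val : C → V) '' cutEdges (G.induce C) A' =
      cross G (Subtype.val '' A') (C \ Subtype.val '' A') := by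
  ext e
  constructor
  · rintro ⟨e', ⟨he', u, v, rfl, hu, hv⟩, rfl⟩
    rw [SimpleGraph.mem_edgeSet] at he'
    refine ⟨?_, u, v, rfl, ⟨u, hu, rfl⟩, ⟨v.2, ?_⟩⟩
    · exact he'
    · rintro ⟨w, hw, hwv⟩
      exact hv ((Subtype.val_injective hwv) ▸ hw)
  · rintro ⟨he, u, v, rfl, ⟨u', hu', rfl⟩, hv⟩
    refine ⟨s(u', ⟨v, hv.1⟩), ⟨?_, u', ⟨v, hv.1⟩, rfl, hu', ?_⟩, rfl⟩
    · exact (SimpleGraph.mem_edgeSet _).2 ((SimpleGraph.mem_edgeSet G).1 he)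
    · intro hmem
      exact hv.2 ⟨⟨v, hv.1⟩, hmem, rfl⟩

lemma ncard_cutEdges_eq (G : SimpleGraph V) (C : Set V) (A' : Set ↥C) :
    (cutEdges (G.induce C) A').ncard =
      (cross G (Subtype.val '' A') (C \ Subtype.val '' A')).ncard := by
  rw [← image_cutEdges, Set.ncard_image_of_injective _ (Sym2.map.injective Subtype.val_injective)]

lemma conn_iff (G : SimpleGraph V) (c : ℕ) (C : Set V) :
    IsCEdgeConn (G.induce C) c ↔ Conn G c C := by
  constructor
  · intro h A hAC hA hCA
    set A' : Set ↥C := Subtype.val ⁻¹' A with hA'def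
    have hval : Subtype.val '' A' = A := by
      apply Set.Subset.antisymm
      · rintro x ⟨y, hy, rfl⟩; exact hy
      · intro x hx; exact ⟨⟨x, hAC hx⟩, hx, rfl⟩
    have h1 : A'.Nonempty := by
      obtain ⟨a, ha⟩ := hA
      exact ⟨⟨a, hAC ha⟩, ha⟩
    have h2 : A'ᶜ.Nonempty := by
      obtain ⟨b, hbC, hbA⟩ := hCA
      exact ⟨⟨b, hbC⟩, hbA⟩
    have := h A' h1 h2
    rwa [ncard_cutEdges_eq, hval] at this
  · intro h A' h1 h2
    rw [ncard_cutEdges_eq]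
    have hAC : Subtype.val '' A' ⊆ C := by
      rintro x ⟨y, _, rfl⟩; exact y.2
    refine h _ hAC ?_ ?_
    · obtain ⟨a, ha⟩ := h1; exact ⟨a, a, ha, rfl⟩
    · obtain ⟨b, hb⟩ := h2
      refine ⟨b, b.2, ?_⟩
      rintro ⟨b', hb', hbb⟩
      exact hb (Subtype.val_injective hbb ▸ hb')

lemma conn_singleton (G : SimpleGraph V) (c : ℕ) (v : V) : Conn G c {v} := by
  intro A hAC hA hCA
  obtain ⟨a, ha⟩ := hA
  obtain ⟨b, hb1, hb2⟩ := hCA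
  cases hAC ha
  cases hb1
  exact absurd ha hb2

/-- Union of two overlapping `c`-edge-connected sets is `c`-edge-connected. -/
lemma conn_union [Finite V] (G : SimpleGraph V) (c : ℕ) {C D : Set V}
    (hC : Conn G c C) (hD : Conn G c D) (hx : (C ∩ D).Nonempty) :
    Conn G c (C ∪ D) := by
  intro A hAC hA hCA
  obtain ⟨x, hxC, hxD⟩ := hx
  have key : ∀ E : Set V, Conn G c E → E ⊆ C ∪ D → (A ∩ E).Nonempty → (E \ A).Nonempty →
      c ≤ (cross G A ((C ∪ D) \ A)).ncard := by
    intro E hE hECD h1 h2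
    have h3 : E \ (A ∩ E) = E \ A := by
      ext y; constructor
      · rintro ⟨hyE, hy⟩; exact ⟨hyE, fun hyA => hy ⟨hyA, hyE⟩⟩
      · rintro ⟨hyE, hy⟩; exact ⟨hyE, fun h => hy h.1⟩
    have := hE (A ∩ E) Set.inter_subset_right h1 (by rw [h3]; exact h2)
    refine this.trans (Set.ncard_le_ncard ?_ (Set.toFinite _))
    rw [h3]
    refine cross_mono G Set.inter_subset_left ?_
    rintro y ⟨hyE, hyA⟩
    exact ⟨hECD hyE, hyA⟩
  by_cases hc1 : (A ∩ C).Nonempty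
  · by_cases hc2 : (C \ A).Nonempty
    · exact key C hC Set.subset_union_left hc1 hc2
    · have hCsubA : C ⊆ A := fun y hy => by
        by_contra hyA; exact hc2 ⟨y, hy, hyA⟩
      by_cases hd2 : (D \ A).Nonempty
      · exact key D hD Set.subset_union_right ⟨x, hCsubA hxC, hxD⟩ hd2
      · exfalso
        have hDsubA : D ⊆ A := fun y hy => by
          by_contra hyA; exact hd2 ⟨y, hy, hyA⟩
        obtain ⟨z, hz1, hz2⟩ := hCA
        exact hz2 (hz1.elim (fun h => hCsubA h) (fun h => hDsubA h))
  · by_cases hd1 : (A ∩ D).Nonempty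
    · by_cases hd2 : (D \ A).Nonempty
      · exact key D hD Set.subset_union_right hd1 hd2
      · exfalso
        have hDsubA : D ⊆ A := fun y hy => by
          by_contra hyA; exact hd2 ⟨y, hy, hyA⟩
        exact hc1 ⟨x, hDsubA hxD, hxC⟩
    · exfalso
      obtain ⟨a, ha⟩ := hA
      rcases hAC ha with h | h
      · exact hc1 ⟨a, ha, h⟩
      · exact hd1 ⟨a, ha, h⟩

lemma conn_cut_le [Finite V] (G : SimpleGraph V) {c : ℕ} {C A W : Set V}
    (hC : Conn G c C) (hCW : C ⊆ W) (h1 : (A ∩ C).Nonempty) (h2 : (C \ A).Nonempty) :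
    c ≤ (cross G A (W \ A)).ncard := by
  have h3 : C \ (A ∩ C) = C \ A := by
    ext y; constructor
    · rintro ⟨hyE, hy⟩; exact ⟨hyE, fun hyA => hy ⟨hyA, hyE⟩⟩
    · rintro ⟨hyE, hy⟩; exact ⟨hyE, fun h => hy h.1⟩
  have := hC (A ∩ C) Set.inter_subset_right h1 (by rw [h3]; exact h2)
  refine this.trans (Set.ncard_le_ncard ?_ (Set.toFinite _))
  rw [h3]
  exact cross_mono G Set.inter_subset_left (fun y hy => ⟨hCW hy.1, hy.2⟩)

variable [Finite V]

/-- Every vertex lies in some component. -/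
lemma exists_comp (G : SimpleGraph V) (c : ℕ) (v : V) : ∃ C, IsCComp G c C ∧ v ∈ C := by
  have hfin : {D : Set V | v ∈ D ∧ Conn G c D}.Finite := Set.toFinite _
  have hne : {D : Set V | v ∈ D ∧ Conn G c D}.Nonempty :=
    ⟨{v}, rfl, conn_singleton G c v⟩
  obtain ⟨C, ⟨hvC, hC⟩, hmax⟩ := Set.Finite.exists_maximalFor Set.ncard _ hfin hne
  refine ⟨C, ⟨⟨v, hvC⟩, (conn_iff G c C).2 hC, ?_⟩, hvC⟩
  intro D hCD hD
  have hD' : Conn G c D := (conn_iff G c D).1 hD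
  have heq := @hmax D ⟨hCD hvC, hD'⟩ (Set.ncard_le_ncard hCD (Set.toFinite _))
  exact (Set.eq_of_subset_of_ncard_le hCD heq (Set.toFinite _)).symm

lemma comp_disjoint (G : SimpleGraph V) (c : ℕ) {C D : Set V}
    (hC : IsCComp G c C) (hD : IsCComp G c D) (hne : C ≠ D) : Disjoint C D := by
  rw [Set.disjoint_iff_inter_eq_empty]
  by_contra h
  have hx : (C ∩ D).Nonempty := Set.nonempty_iff_ne_empty.2 h
  have hU : Conn G c (C ∪ D) :=
    conn_union G c ((conn_iff _ _ _).1 hC.2.1) ((conn_iff _ _ _).1 hD.2.1) hx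
  have h1 := hC.2.2 (C ∪ D) Set.subset_union_left ((conn_iff _ _ _).2 hU)
  have h2 := hD.2.2 (C ∪ D) Set.subset_union_right ((conn_iff _ _ _).2 hU)
  exact hne (h1.symm.trans h2)

/-- Edges between distinct members of the family `S`. -/
def crossAll (G : SimpleGraph V) (S : Finset (Set V)) : Set (Sym2 V) :=
  {e | e ∈ G.edgeSet ∧ ∃ u v, e = s(u, v) ∧ (∃ C ∈ S, u ∈ C) ∧ (∃ C ∈ S, v ∈ C) ∧
    ∀ C ∈ S, ¬(u ∈ C ∧ v ∈ C)}

lemma crossAll_mono (G : SimpleGraph V) {S T : Finset (Set V)} (hST : S ⊆ T)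
    (e : Sym2 V) (he : e ∈ G.edgeSet) (u v : V) (huv : e = s(u, v))
    (hu : ∃ C ∈ S, u ∈ C) (hv : ∃ C ∈ S, v ∈ C)
    (hno : ∀ C ∈ T, ¬(u ∈ C ∧ v ∈ C)) : e ∈ crossAll G S := by
  obtain ⟨Cu, hCu, hu⟩ := hu
  obtain ⟨Cv, hCv, hv⟩ := hv
  exact ⟨he, u, v, huv, ⟨Cu, hCu, hu⟩, ⟨Cv, hCv, hv⟩, fun C hCS => hno C (hST hCS)⟩

lemma crossAll_card (G : SimpleGraph V) (c : ℕ) :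
    ∀ S : Finset (Set V), (∀ C ∈ S, IsCComp G c C) → S.Nonempty →
      (crossAll G S).ncard + c ≤ c * S.card := by
  classical
  intro S
  induction S using Finset.strongInduction with
  | _ S ih =>
    intro hS hSne
    by_cases h1 : S.card = 1
    · obtain ⟨C, rfl⟩ := Finset.card_eq_one.1 h1
      have hemp : crossAll G {C} = ∅ := by
        ext e
        simp only [Set.mem_empty_iff_false, iff_false]
        rintro ⟨he, u, v, rfl, ⟨Cu, hCu, hu⟩, ⟨Cv, hCv, hv⟩, hno⟩
        exact hno C (Finset.mem_singleton_self C)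
          ⟨(Finset.mem_singleton.1 hCu) ▸ hu, (Finset.mem_singleton.1 hCv) ▸ hv⟩
      rw [hemp, Set.ncard_empty, Finset.card_singleton, Nat.mul_one, Nat.zero_add]
    · -- at least two components
      obtain ⟨C0, hC0S⟩ := hSne
      have h2card : 2 ≤ S.card := by
        have := Finset.card_pos.2 ⟨C0, hC0S⟩
        omega
      set U : Set V := ⋃₀ (↑S : Set (Set V)) with hUdef
      have hmemU : ∀ x, x ∈ U ↔ ∃ C ∈ S, x ∈ C := by
        intro x
        simp [hUdef, Set.mem_sUnion]
      have hCU : ∀ C ∈ S, C ⊆ U := fun C hC x hx => (hmemU x).2 ⟨C, hC, hx⟩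
      -- U is not c-edge-connected
      have hnotconn : ¬ Conn G c U := by
        intro hconn
        obtain ⟨C1, hC1S, hC1ne⟩ := Finset.exists_mem_ne (s := S) (by omega) C0
        obtain ⟨y, hy⟩ := (hS C1 hC1S).1
        have hyC0 : y ∉ C0 :=
          fun hyC0 => (comp_disjoint G c (hS C1 hC1S) (hS C0 hC0S) hC1ne).ne_of_mem hy hyC0 rfl
        have := (hS C0 hC0S).2.2 U (hCU C0 hC0S) ((conn_iff G c U).2 hconn)
        exact hyC0 (this ▸ hCU C1 hC1S hy)
      rw [Conn] at hnotconn
      push_neg at hnotconn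
      obtain ⟨A, hAU, hAne, hUAne, hcut⟩ := hnotconn
      -- every component is inside A or inside U \ A
      have hsplit : ∀ C ∈ S, C ⊆ A ∨ C ⊆ U \ A := by
        intro C hCS
        by_cases hca : (A ∩ C).Nonempty
        · by_cases hcb : (C \ A).Nonempty
          · exact absurd (conn_cut_le G ((conn_iff _ _ _).1 (hS C hCS).2.1)
              (hCU C hCS) hca hcb) (by omega)
          · left
            intro z hz
            by_contra hzA
            exact hcb ⟨z, hz, hzA⟩
        · right
          intro z hz
          exact ⟨hCU C hCS hz, fun hzA => hca ⟨z, hzA, hz⟩⟩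
      set S1 : Finset (Set V) := S.filter (fun C => C ⊆ A) with hS1def
      set S2 : Finset (Set V) := S.filter (fun C => ¬ C ⊆ A) with hS2def
      have hS2sub : ∀ C ∈ S2, C ⊆ U \ A := by
        intro C hC
        rw [hS2def, Finset.mem_filter] at hC
        exact (hsplit C hC.1).resolve_left hC.2
      have hS1ne : S1.Nonempty := by
        obtain ⟨a, ha⟩ := hAne
        obtain ⟨C, hCS, haC⟩ := (hmemU a).1 (hAU ha)
        refine ⟨C, Finset.mem_filter.2 ⟨hCS, ?_⟩⟩
        rcases hsplit C hCS with h | h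
        · exact h
        · exact absurd (h haC).2 (fun hh => hh ha)
      have hS2ne : S2.Nonempty := by
        obtain ⟨b, hbU, hbA⟩ := hUAne
        obtain ⟨C, hCS, hbC⟩ := (hmemU b).1 hbU
        refine ⟨C, Finset.mem_filter.2 ⟨hCS, fun hsub => hbA (hsub hbC)⟩⟩
      have hS1sS : S1 ⊂ S := by
        refine Finset.ssubset_iff_of_subset (Finset.filter_subset _ _) |>.2 ?_
        obtain ⟨C, hC⟩ := hS2ne
        rw [hS2def, Finset.mem_filter] at hC
        exact ⟨C, hC.1, fun hmem => hC.2 (Finset.mem_filter.1 hmem).2⟩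
      have hS2sS : S2 ⊂ S := by
        refine Finset.ssubset_iff_of_subset (Finset.filter_subset _ _) |>.2 ?_
        obtain ⟨C, hC⟩ := hS1ne
        rw [hS1def, Finset.mem_filter] at hC
        exact ⟨C, hC.1, fun hmem => (Finset.mem_filter.1 hmem).2 hC.2⟩
      have hsum : S1.card + S2.card = S.card := Finset.card_filter_add_card_filter_not _
      -- decomposition of the cross edges
      have hdecomp : crossAll G S ⊆ crossAll G S1 ∪ crossAll G S2 ∪ cross G A (U \ A) := by
        rintro e ⟨he, u, v, rfl, ⟨Cu, hCuS, hu⟩, ⟨Cv, hCvS, hv⟩, hno⟩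
        by_cases hu1 : Cu ⊆ A
        · by_cases hv1 : Cv ⊆ A
          · exact Or.inl (Or.inl (crossAll_mono G (Finset.filter_subset _ _) _ he u v rfl
              ⟨Cu, Finset.mem_filter.2 ⟨hCuS, hu1⟩, hu⟩
              ⟨Cv, Finset.mem_filter.2 ⟨hCvS, hv1⟩, hv⟩ hno))
          · exact Or.inr ⟨he, u, v, rfl, hu1 hu,
              hS2sub Cv (Finset.mem_filter.2 ⟨hCvS, hv1⟩) hv⟩
        · by_cases hv1 : Cv ⊆ A
          · refine Or.inr ⟨he, v, u, Sym2.eq_swap, hv1 hv,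
              hS2sub Cu (Finset.mem_filter.2 ⟨hCuS, hu1⟩) hu⟩
          · exact Or.inl (Or.inr (crossAll_mono G (Finset.filter_subset _ _) _ he u v rfl
              ⟨Cu, Finset.mem_filter.2 ⟨hCuS, hu1⟩, hu⟩
              ⟨Cv, Finset.mem_filter.2 ⟨hCvS, hv1⟩, hv⟩ hno))
      have hle : (crossAll G S).ncard ≤
          (crossAll G S1).ncard + (crossAll G S2).ncard + (cross G A (U \ A)).ncard := by
        calc (crossAll G S).ncard
            ≤ (crossAll G S1 ∪ crossAll G S2 ∪ cross G A (U \ A)).ncard :=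
              Set.ncard_le_ncard hdecomp (Set.toFinite _)
          _ ≤ (crossAll G S1 ∪ crossAll G S2).ncard + (cross G A (U \ A)).ncard :=
              Set.ncard_union_le _ _
          _ ≤ (crossAll G S1).ncard + (crossAll G S2).ncard + (cross G A (U \ A)).ncard :=
              Nat.add_le_add_right (Set.ncard_union_le _ _) _
      have ih1 := ih S1 hS1sS (fun C hC => hS C (Finset.filter_subset _ _ hC)) hS1ne
      have ih2 := ih S2 hS2sS (fun C hC => hS C (Finset.filter_subset _ _ hC)) hS2ne
      have hmul : c * S.card = c * S1.card + c * S2.card := by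
        rw [← hsum, Nat.mul_add]
      rw [hmul]
      omega

section Assembly

variable [Fintype V]

/-- The finset of `c`-edge-connected components. -/
noncomputable def compS (G : SimpleGraph V) (c : ℕ) : Finset (Set V) :=
  (Set.toFinite {C : Set V | IsCComp G c C}).toFinset

lemma mem_compS {G : SimpleGraph V} {c : ℕ} {C : Set V} :
    C ∈ compS G c ↔ IsCComp G c C := Set.Finite.mem_toFinset _

lemma card_compS (G : SimpleGraph V) (c : ℕ) :
    {C : Set V | IsCComp G c C}.ncard = (compS G c).card :=
  Set.ncard_eq_toFinset_card _ _

lemma sum_ncard_comps (G : SimpleGraph V) (c : ℕ) :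
    ∑ C ∈ compS G c, C.ncard = Fintype.card V := by
  classical
  have hdisj : ∀ C ∈ compS G c, ∀ D ∈ compS G c, C ≠ D →
      Disjoint C.toFinset D.toFinset := by
    intro C hC D hD hne
    rw [Set.disjoint_toFinset]
    exact comp_disjoint G c (mem_compS.1 hC) (mem_compS.1 hD) hne
  have huniv : Finset.univ = (compS G c).biUnion (fun C => C.toFinset) := by
    ext v
    simp only [Finset.mem_univ, true_iff, Finset.mem_biUnion, Set.mem_toFinset]
    obtain ⟨C, hC, hv⟩ := exists_comp G c v
    exact ⟨C, mem_compS.2 hC, hv⟩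
  calc ∑ C ∈ compS G c, C.ncard = ∑ C ∈ compS G c, C.toFinset.card := by
        refine Finset.sum_congr rfl (fun C _ => ?_)
        exact Set.ncard_eq_toFinset_card' C
    _ = ((compS G c).biUnion (fun C => C.toFinset)).card := (Finset.card_biUnion hdisj).symm
    _ = Fintype.card V := by rw [← huniv, Finset.card_univ]

open scoped Classical in
/-- Vertices forming trivial components. -/
noncomputable def trivV (G : SimpleGraph V) (c : ℕ) : Finset V :=
  Finset.univ.filter (fun v => IsCComp G c {v})

lemma two_mul_card_le (G : SimpleGraph V) (c : ℕ) :
    2 * (compS G c).card ≤ Fintype.card V + (trivV G c).card := by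
  classical
  have key : ∀ C ∈ compS G c, 2 ≤ C.ncard + ((trivV G c).filter (fun v => v ∈ C)).card := by
    intro C hC
    have hCcomp := mem_compS.1 hC
    have hpos : 0 < C.ncard := (Set.ncard_pos (Set.toFinite _)).2 hCcomp.1
    by_cases h1 : C.ncard = 1
    · obtain ⟨v, rfl⟩ := Set.ncard_eq_one.1 h1
      have hvmem : v ∈ (trivV G c).filter (fun w => w ∈ ({v} : Set V)) := by
        refine Finset.mem_filter.2 ⟨?_, rfl⟩
        exact Finset.mem_filter.2 ⟨Finset.mem_univ _, hCcomp⟩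
      have := Finset.card_pos.2 ⟨v, hvmem⟩
      rw [Set.ncard_singleton]
      exact Nat.add_le_add_left (Finset.card_pos.2 ⟨v, hvmem⟩) 1
    · omega
  have hdisj : ∀ C ∈ compS G c, ∀ D ∈ compS G c, C ≠ D →
      Disjoint ((trivV G c).filter (fun v => v ∈ C)) ((trivV G c).filter (fun v => v ∈ D)) := by
    intro C hC D hD hne
    rw [Finset.disjoint_left]
    intro v hv1 hv2
    exact (comp_disjoint G c (mem_compS.1 hC) (mem_compS.1 hD) hne).ne_of_mem
      (Finset.mem_filter.1 hv1).2 (Finset.mem_filter.1 hv2).2 rfl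
  have hsum2 : ∑ C ∈ compS G c, ((trivV G c).filter (fun v => v ∈ C)).card ≤ (trivV G c).card := by
    rw [← Finset.card_biUnion hdisj]
    exact Finset.card_le_card (Finset.biUnion_subset.2 (fun C _ => Finset.filter_subset _ _))
  calc 2 * (compS G c).card = ∑ _C ∈ compS G c, 2 := by
        rw [Finset.sum_const, smul_eq_mul, mul_comm]
    _ ≤ ∑ C ∈ compS G c, (C.ncard + ((trivV G c).filter (fun v => v ∈ C)).card) :=
        Finset.sum_le_sum key
    _ = (∑ C ∈ compS G c, C.ncard) + ∑ C ∈ compS G c, ((trivV G c).filter (fun v => v ∈ C)).card :=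
        Finset.sum_add_distrib
    _ ≤ Fintype.card V + (trivV G c).card := by
        rw [sum_ncard_comps G c]
        omega

lemma ncard_incidence (G : SimpleGraph V) (v : V) :
    {e | e ∈ G.edgeSet ∧ v ∈ e}.ncard = (G.neighborSet v).ncard := by
  classical
  have h1 : {e | e ∈ G.edgeSet ∧ v ∈ e} = G.incidenceSet v := rfl
  rw [h1, ← Nat.card_coe_set_eq, ← Nat.card_coe_set_eq]
  exact Nat.card_congr (G.incidenceSetEquivNeighborSet v)

open scoped Classical in
lemma double_count [DecidableEq V] (T : Finset V) (XF : Finset (Sym2 V)) :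
    ∑ v ∈ T, (XF.filter (fun e => v ∈ e)).card ≤ 2 * XF.card := by
  have h1 : ∀ v ∈ T, (XF.filter (fun e => v ∈ e)).card
      = ∑ e ∈ XF, if v ∈ e then 1 else 0 := fun v _ => Finset.card_filter _ _
  have h2 : ∀ e : Sym2 V, (∑ v ∈ T, if v ∈ e then 1 else 0) ≤ 2 := by
    intro e
    induction e using Sym2.ind with
    | _ a b =>
      rw [← Finset.card_filter]
      have hsub : T.filter (fun v => v ∈ s(a, b)) ⊆ {a, b} := by
        intro v hv
        rcases Sym2.mem_iff.1 (Finset.mem_filter.1 hv).2 with rfl | rfl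
        · exact Finset.mem_insert_self _ _
        · exact Finset.mem_insert_of_mem (Finset.mem_singleton_self _)
      exact (Finset.card_le_card hsub).trans ((Finset.card_insert_le _ _).trans (by simp))
  calc ∑ v ∈ T, (XF.filter (fun e => v ∈ e)).card
      = ∑ v ∈ T, ∑ e ∈ XF, (if v ∈ e then 1 else 0) := Finset.sum_congr rfl h1
    _ = ∑ e ∈ XF, ∑ v ∈ T, (if v ∈ e then 1 else 0) := Finset.sum_comm
    _ ≤ ∑ _e ∈ XF, 2 := Finset.sum_le_sum (fun e _ => h2 e)
    _ = 2 * XF.card := by rw [Finset.sum_const, smul_eq_mul, mul_comm]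

end Assembly

end Stmt2Aux

open Stmt2Aux in
/-- if at least `3n/4` of the vertices of `G` have degree at least `4c`,
then `G` has at most `5n/6` `c`-edge-connected components. -/
theorem stmt2 {V : Type*} [Fintype V] (c : ℕ) (hc : 0 < c) (G : SimpleGraph V)
    (hdeg : 3 * Fintype.card V ≤ 4 * {v : V | 4 * c ≤ (G.neighborSet v).ncard}.ncard) :
    6 * {C : Set V | IsCComp G c C}.ncard ≤ 5 * Fintype.card V := by
  classical
  rw [card_compS G c]
  by_cases hSne : (compS G c).Nonempty
  · set n := Fintype.card V with hn
    have hlow : 4 * ((trivV G c).filter (fun v => ¬ 4 * c ≤ (G.neighborSet v).ncard)).card ≤ n := by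
      have hsub : (trivV G c).filter (fun v => ¬ 4 * c ≤ (G.neighborSet v).ncard) ⊆
          Finset.univ.filter (fun v => ¬ 4 * c ≤ (G.neighborSet v).ncard) :=
        fun v hv => Finset.mem_filter.2 ⟨Finset.mem_univ _, (Finset.mem_filter.1 hv).2⟩
      have h1 := Finset.card_le_card hsub
      have h2 : (Finset.univ.filter (fun v : V => 4 * c ≤ (G.neighborSet v).ncard)).card +
          (Finset.univ.filter (fun v : V => ¬ 4 * c ≤ (G.neighborSet v).ncard)).card = n := by
        rw [Finset.card_filter_add_card_filter_not, Finset.card_univ]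
      have h3 : {v : V | 4 * c ≤ (G.neighborSet v).ncard}.ncard =
          (Finset.univ.filter (fun v : V => 4 * c ≤ (G.neighborSet v).ncard)).card := by
        rw [Set.ncard_eq_toFinset_card']
        congr 1
        ext v
        simp [Set.mem_toFinset]
      rw [h3] at hdeg
      omega
    have h2m : 2 * (compS G c).card ≤ n + (trivV G c).card := two_mul_card_le G c
    have hsplit : ((trivV G c).filter (fun v => 4 * c ≤ (G.neighborSet v).ncard)).card +
        ((trivV G c).filter (fun v => ¬ 4 * c ≤ (G.neighborSet v).ncard)).card
        = (trivV G c).card :=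
      Finset.card_filter_add_card_filter_not _
    have hhigh : 2 * ((trivV G c).filter (fun v => 4 * c ≤ (G.neighborSet v).ncard)).card + 1 ≤
        (compS G c).card := by
      set X := crossAll G (compS G c) with hX
      have hXc : X.ncard + c ≤ c * (compS G c).card :=
        crossAll_card G c (compS G c) (fun C hC => mem_compS.1 hC) hSne
      have hinc : ∀ v ∈ (trivV G c).filter (fun v => 4 * c ≤ (G.neighborSet v).ncard),
          4 * c ≤ (X.toFinset.filter (fun e => v ∈ e)).card := by
        intro v hv
        obtain ⟨hvT, hvdeg⟩ := Finset.mem_filter.1 hv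
        have hvcomp : IsCComp G c {v} := (Finset.mem_filter.1 hvT).2
        have hseteq : {e | e ∈ G.edgeSet ∧ v ∈ e} = {e ∈ X | v ∈ e} := by
          ext e
          constructor
          · rintro ⟨he, hve⟩
            obtain ⟨u, rfl⟩ := Sym2.mem_iff_exists.1 hve
            have hadj : G.Adj v u := (SimpleGraph.mem_edgeSet G).1 he
            obtain ⟨Cu, hCu, huCu⟩ := exists_comp G c u
            refine ⟨⟨he, v, u, rfl, ⟨{v}, mem_compS.2 hvcomp, rfl⟩,
              ⟨Cu, mem_compS.2 hCu, huCu⟩, ?_⟩, Sym2.mem_mk_left v u⟩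
            rintro C hCS ⟨hvC, huC⟩
            by_cases hCv : C = {v}
            · rw [hCv] at huC
              exact hadj.ne' huC
            · exact (comp_disjoint G c (mem_compS.1 hCS) hvcomp hCv).ne_of_mem hvC rfl rfl
          · rintro ⟨⟨he, _⟩, hve⟩
            exact ⟨he, hve⟩
        calc 4 * c ≤ (G.neighborSet v).ncard := hvdeg
          _ = {e | e ∈ G.edgeSet ∧ v ∈ e}.ncard := (ncard_incidence G v).symm
          _ = (X.toFinset.filter (fun e => v ∈ e)).card := by
              rw [hseteq, Set.ncard_eq_toFinset_card']
              congr 1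
              ext e
              simp only [Set.mem_toFinset, Finset.mem_filter, Set.mem_setOf_eq]
      have hsum : 4 * c * ((trivV G c).filter (fun v => 4 * c ≤ (G.neighborSet v).ncard)).card ≤
          2 * X.toFinset.card := by
        calc 4 * c * ((trivV G c).filter (fun v => 4 * c ≤ (G.neighborSet v).ncard)).card
            = ∑ _v ∈ (trivV G c).filter (fun v => 4 * c ≤ (G.neighborSet v).ncard), 4 * c := by
              rw [Finset.sum_const, smul_eq_mul, mul_comm]
          _ ≤ ∑ v ∈ (trivV G c).filter (fun v => 4 * c ≤ (G.neighborSet v).ncard),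
                (X.toFinset.filter (fun e => v ∈ e)).card := Finset.sum_le_sum hinc
          _ ≤ 2 * X.toFinset.card := double_count _ _
      have hXcard : X.toFinset.card = X.ncard := (Set.ncard_eq_toFinset_card' X).symm
      set th := ((trivV G c).filter (fun v => 4 * c ≤ (G.neighborSet v).ncard)).card with hth
      have hfin : (2 * c) * (2 * th + 1) ≤ (2 * c) * (compS G c).card := by
        calc (2 * c) * (2 * th + 1) = 4 * c * th + 2 * c := by ring
          _ ≤ 2 * X.ncard + 2 * c := by omega
          _ ≤ 2 * (c * (compS G c).card) := by omega
          _ = (2 * c) * (compS G c).card := by ring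
      exact Nat.le_of_mul_le_mul_left hfin (by omega)
    omega
  · rw [Finset.not_nonempty_iff_eq_empty.1 hSne]
    simp
end

section
/- Let c be a positive integer and let G = (V, E) be a finite undirected graph on n vertices such that at least 3n/4 of its vertices have degree at least 4c. Let V_0 be the set of vertices of G that form trivial (singleton) c-edge-connected components. Then |V_0| ≤ 2n/3. -/
open SimpleGraph

/-!
Colour the vertices so as to minimise `2·(number of bichromatic edges) − (2c − 1)·(number of
colours)`. Splitting a colour class along a cut with fewer than `c` edges adds at most `c − 1`
bichromatic edges and one colour, so at a minimiser every colour class is `c`-edge-connected, and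
hence every trivial `c`-edge-connected component is a singleton class. Comparing with the
one-colour colouring gives at most `(2c − 1)(k − 1)/2` bichromatic edges for `k` colours, while
every high-degree singleton class is incident to at least `4c` of them; so fewer than `k/2`
singleton classes have high degree. Classes that are not singletons have at least two vertices,
so `2k ≤ n + #singletons`, and at most `n/4` vertices have low degree; together these give
`|V₀| ≤ 2n/3`.
-/

open Finset in
lemma two_mul_ncard_range_le {V α : Type*} [Finite V] (χ : V → α) :
    2 * (Set.range χ).ncard ≤ Nat.card V + {v | ∀ u, χ u = χ v → u = v}.ncard := by
  classical
  have := Fintype.ofFinite V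
  set S := univ.filter fun v => ∀ u, χ u = χ v → u = v
  have hfiber : ∀ i ∈ univ.image χ,
      2 ≤ #(univ.filter (χ · = i)) + #(S.filter (χ · = i)) := by
    intro i hi
    obtain ⟨w, -, rfl⟩ := mem_image.1 hi
    have hw : w ∈ univ.filter (χ · = χ w) := by simp
    have hpos := card_pos.2 ⟨w, hw⟩
    by_contra! hlt
    have hwS : w ∈ S.filter (χ · = χ w) := by
      simp only [S, mem_filter, mem_univ, true_and, and_true]
      exact fun u hu => card_le_one.1 (by omega) u (by simp [hu]) w hw
    have := card_pos.2 ⟨w, hwS⟩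
    omega
  have hV : Fintype.card V = ∑ i ∈ univ.image χ, #(univ.filter (χ · = i)) :=
    card_eq_sum_card_fiberwise fun v _ => mem_image_of_mem χ (mem_univ v)
  have hS : #S = ∑ i ∈ univ.image χ, #(S.filter (χ · = i)) :=
    card_eq_sum_card_fiberwise fun v _ => mem_image_of_mem χ (mem_univ v)
  have hsum := sum_le_sum hfiber
  rw [sum_const, smul_eq_mul, sum_add_distrib, ← hV, ← hS] at hsum
  rw [Nat.card_eq_fintype_card, Set.ncard_eq_toFinset_card', Set.ncard_eq_toFinset_card',
    Set.toFinset_range]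
  simpa [S, mul_comm] using hsum

lemma Set.ncard_le_ncard_inter_add_ncard_compl {α : Type*} [Finite α] {A B : Set α} (h : A ⊆ B)
    (H : Set α) : A.ncard ≤ (B ∩ H).ncard + Hᶜ.ncard := by
  calc A.ncard ≤ (B ∩ H ∪ Hᶜ).ncard := Set.ncard_le_ncard fun a ha => by
        by_cases haH : a ∈ H
        exacts [.inl ⟨h ha, haH⟩, .inr haH]
    _ ≤ _ := Set.ncard_union_le _ _

namespace SimpleGraph

variable {V α : Type*} (G : SimpleGraph V)

lemma mul_ncard_le_two_mul_ncard_edgeSet [Finite V] {T : Set V} {d : ℕ}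
    (hT : ∀ v ∈ T, d ≤ (G.neighborSet v).ncard) : d * T.ncard ≤ 2 * G.edgeSet.ncard := by
  classical
  have := Fintype.ofFinite V
  calc d * T.ncard = ∑ v ∈ T.toFinset, d := by
        rw [Finset.sum_const, smul_eq_mul, mul_comm, Set.ncard_eq_toFinset_card']
    _ ≤ ∑ v ∈ T.toFinset, G.degree v := Finset.sum_le_sum fun v hv => by
        simpa [Set.ncard_eq_toFinset_card', ← card_neighborSet_eq_degree] using
          hT v (Set.mem_toFinset.1 hv)
    _ ≤ ∑ v, G.degree v := Finset.sum_le_sum_of_subset (Finset.subset_univ _)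
    _ = 2 * G.edgeSet.ncard := by
        rw [sum_degrees_eq_twice_card_edges, Set.ncard_eq_toFinset_card', Set.toFinset_card,
          edgeFinset, Set.toFinset_card]

def crossGraph (χ : V → α) : SimpleGraph V := G ⊓ (⊤ : SimpleGraph α).comap χ

@[simp]
lemma crossGraph_adj {χ : V → α} {u v : V} :
    (G.crossGraph χ).Adj u v ↔ G.Adj u v ∧ χ u ≠ χ v := by
  simp [crossGraph]

lemma neighborSet_crossGraph {χ : V → α} {v : V} (hv : ∀ u, χ u = χ v → u = v) :
    (G.crossGraph χ).neighborSet v = G.neighborSet v := by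
  ext u
  simp only [mem_neighborSet, crossGraph_adj, and_iff_left_iff_imp]
  exact fun hvu h => hvu.ne (hv u h.symm).symm

lemma edgeSet_crossGraph_const (a : α) : (G.crossGraph fun _ : V => a).edgeSet = ∅ := by
  ext e
  induction e using Sym2.ind
  simp

open Classical in
noncomputable def recolor (χ : V → α) (A : Set V) (j : α) : V → α :=
  fun v => if v ∈ A then j else χ v

section recolor

variable {χ : V → α} {A : Set V} {j : α} {v : V}

lemma recolor_of_mem (hv : v ∈ A) : recolor χ A j v = j := by simp [recolor, hv]

lemma recolor_of_notMem (hv : v ∉ A) : recolor χ A j v = χ v := by simp [recolor, hv]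

lemma range_recolor (hA : A.Nonempty) (hout : ∀ a ∈ A, ∃ b ∉ A, χ b = χ a) :
    Set.range (recolor χ A j) = insert j (Set.range χ) := by
  ext x
  constructor
  · rintro ⟨v, rfl⟩
    by_cases hv : v ∈ A
    · exact .inl (recolor_of_mem hv)
    · exact .inr ⟨v, (recolor_of_notMem hv).symm⟩
  · rintro (rfl | ⟨v, rfl⟩)
    · obtain ⟨a, ha⟩ := hA
      exact ⟨a, recolor_of_mem ha⟩
    · by_cases hv : v ∈ A
      · obtain ⟨b, hb, hbv⟩ := hout v hv
        exact ⟨b, (recolor_of_notMem hb).trans hbv⟩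
      · exact ⟨v, recolor_of_notMem hv⟩

end recolor

lemma edgeSet_crossGraph_recolor_subset (χ : V → α) (i j : α) (S : Set (χ ⁻¹' {i})) :
    (G.crossGraph (recolor χ (Subtype.val '' S) j)).edgeSet ⊆
      (G.crossGraph χ).edgeSet ∪ Sym2.map Subtype.val '' cutEdges (G.induce (χ ⁻¹' {i})) S := by
  have hcut : ∀ u v, u ∈ Subtype.val '' S → v ∉ Subtype.val '' S → G.Adj u v →
      s(u, v) ∈ (G.crossGraph χ).edgeSet ∪
        Sym2.map Subtype.val '' cutEdges (G.induce (χ ⁻¹' {i})) S := by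
    rintro _ v ⟨u, hu, rfl⟩ hv huv
    by_cases hvi : χ v = i
    · exact .inr ⟨s(u, ⟨v, hvi⟩), ⟨huv, u, ⟨v, hvi⟩, rfl, hu, fun h => hv ⟨_, h, rfl⟩⟩, rfl⟩
    · exact .inl ⟨huv, fun h => hvi (h ▸ u.2)⟩
  intro e he
  induction e using Sym2.ind with
  | _ u v =>
  rw [mem_edgeSet, crossGraph_adj] at he
  by_cases hu : u ∈ Subtype.val '' S <;> by_cases hv : v ∈ Subtype.val '' S
  · simp [recolor_of_mem hu, recolor_of_mem hv] at he
  · exact hcut u v hu hv he.1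
  · rw [Sym2.eq_swap]
    exact hcut v u hv hu he.1.symm
  · left
    simpa [recolor_of_notMem hu, recolor_of_notMem hv] using he

noncomputable def coloringPotential (c : ℕ) (χ : V → α) : ℤ :=
  2 * (G.crossGraph χ).edgeSet.ncard - (2 * c - 1) * (Set.range χ).ncard

lemma coloringPotential_recolor_lt [Finite V] {c : ℕ} {χ : V → α} {i j : α}
    (hj : j ∉ Set.range χ) {S : Set (χ ⁻¹' {i})} (hS : S.Nonempty) (hSc : Sᶜ.Nonempty)
    (hcut : (cutEdges (G.induce (χ ⁻¹' {i})) S).ncard < c) :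
    G.coloringPotential c (recolor χ (Subtype.val '' S) j) < G.coloringPotential c χ := by
  have hcross : (G.crossGraph (recolor χ (Subtype.val '' S) j)).edgeSet.ncard ≤
      (G.crossGraph χ).edgeSet.ncard + (cutEdges (G.induce (χ ⁻¹' {i})) S).ncard :=
    (Set.ncard_le_ncard (G.edgeSet_crossGraph_recolor_subset χ i j S)).trans <|
      (Set.ncard_union_le _ _).trans (Nat.add_le_add_left (Set.ncard_image_le (Set.toFinite _)) _)
  have hout : ∀ a ∈ Subtype.val '' S, ∃ b ∉ Subtype.val '' S, χ b = χ a := by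
    rintro _ ⟨a, -, rfl⟩
    obtain ⟨b, hb⟩ := hSc
    exact ⟨b, fun ⟨b', hb', h⟩ => hb (Subtype.ext h ▸ hb'), b.2.trans a.2.symm⟩
  have hcolors : (Set.range (recolor χ (Subtype.val '' S) j)).ncard = (Set.range χ).ncard + 1 := by
    rw [range_recolor (hS.image _) hout, Set.ncard_insert_of_notMem hj]
  unfold coloringPotential
  rw [hcolors]
  push_cast
  linarith

lemma isCEdgeConn_induce_preimage_of_forall_le [Finite V] {c : ℕ} {χ : V → α}
    (hmin : ∀ χ' : V → α, G.coloringPotential c χ ≤ G.coloringPotential c χ')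
    (hχ : ¬ Function.Surjective χ) (i : α) : IsCEdgeConn (G.induce (χ ⁻¹' {i})) c := by
  intro S hS hSc
  by_contra! hcut
  obtain ⟨j, hj⟩ := not_forall.1 hχ
  exact (hmin _).not_gt (G.coloringPotential_recolor_lt hj hS hSc hcut)

lemma two_mul_ncard_edgeSet_crossGraph_le_of_forall_le [Nonempty V] {c : ℕ} {χ : V → α}
    (hmin : ∀ χ' : V → α, G.coloringPotential c χ ≤ G.coloringPotential c χ') :
    2 * ((G.crossGraph χ).edgeSet.ncard : ℤ) ≤ (2 * c - 1) * ((Set.range χ).ncard - 1) := by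
  have := hmin fun _ => χ (Classical.arbitrary V)
  simp only [coloringPotential, edgeSet_crossGraph_const, Set.range_const, Set.ncard_empty,
    Set.ncard_singleton] at this
  push_cast at this
  linarith

end SimpleGraph

/-- if at least `3n/4` of the vertices of `G` have degree at least `4c`,
then the set `V₀` of vertices forming trivial (singleton) `c`-edge-connected components
satisfies `|V₀| ≤ 2n/3`. -/
theorem stmt3 {V : Type*} [Fintype V] (c : ℕ) (hc : 0 < c) (G : SimpleGraph V)
    (hdeg : 3 * Fintype.card V ≤ 4 * {v : V | 4 * c ≤ (G.neighborSet v).ncard}.ncard) :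
    3 * {v : V | IsCComp G c {v}}.ncard ≤ 2 * Fintype.card V := by
  rcases isEmpty_or_nonempty V with hV | hV
  · simp [Set.eq_empty_of_isEmpty]
  -- one colour more than there are vertices, so that a minimiser leaves a colour free
  obtain ⟨χ, hmin⟩ := Finite.exists_min (G.coloringPotential c (α := Fin (Fintype.card V + 1)))
  have hχ : ¬ Function.Surjective χ := fun h => by
    simpa using Fintype.card_le_of_surjective χ h
  set S := {v | ∀ u, χ u = χ v → u = v}
  set H := {v : V | 4 * c ≤ (G.neighborSet v).ncard}
  have hV₀S : {v : V | IsCComp G c {v}} ⊆ S := fun v hv u hu => by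
    have hclass := hv.2.2 _ (by simp) (G.isCEdgeConn_induce_preimage_of_forall_le hmin hχ (χ v))
    exact hclass.subset hu
  have hcross : 4 * c * (S ∩ H).ncard ≤ 2 * (G.crossGraph χ).edgeSet.ncard :=
    (G.crossGraph χ).mul_ncard_le_two_mul_ncard_edgeSet fun v hv =>
      (G.neighborSet_crossGraph hv.1).symm ▸ hv.2
  have hconst := G.two_mul_ncard_edgeSet_crossGraph_le_of_forall_le hmin
  have hcolors : 2 * (S ∩ H).ncard + 1 ≤ (Set.range χ).ncard := by
    zify at hcross ⊢
    nlinarith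
  have hparts : 2 * (Set.range χ).ncard ≤ Nat.card V + S.ncard := two_mul_ncard_range_le χ
  have hV₀ := Set.ncard_le_ncard_inter_add_ncard_compl hV₀S H
  have hS := Set.ncard_le_ncard_inter_add_ncard_compl (subset_refl S) H
  have hH := Set.ncard_add_ncard_compl H
  rw [Nat.card_eq_fintype_card] at hparts hH
  omega
end

section
/- Let c be a positive integer and let G be a finite undirected graph with vertex set V. Let G' be a spanning subgraph of G, let H be a spanning subgraph of G', and let D be the set of edges of G not in G'. Assume that every connected component of H is c-edge-connected (as a graph on its vertex set with the edges of H), and that every edge of G' has both endpoints in the same connected component of H. Then for all vertices u, v of G: u and v are c-edge-connected in G if and only if u and v are c-edge-connected in the graph H ∪ D (on vertex set V, with edge set E(H) ∪ D). -/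
open SimpleGraph

attribute [local instance] Classical.propDecidable

namespace EM

variable {V : Type*}

/-- out-degree of a dart set. -/
noncomputable def outD (F : Finset (V × V)) (x : V) : ℕ := (F.filter fun d => d.1 = x).card
noncomputable def inD (F : Finset (V × V)) (x : V) : ℕ := (F.filter fun d => d.2 = x).card

lemma outD_insert (F : Finset (V × V)) (d : V × V) (hd : d ∉ F) (x : V) :
    outD (insert d F) x = outD F x + (if d.1 = x then 1 else 0) := by
  unfold outD
  rw [Finset.filter_insert]
  split
  · rw [Finset.card_insert_of_notMem (fun h => hd (Finset.mem_filter.1 h).1)]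
    try simp_all
  · simp_all

lemma inD_insert (F : Finset (V × V)) (d : V × V) (hd : d ∉ F) (x : V) :
    inD (insert d F) x = inD F x + (if d.2 = x then 1 else 0) := by
  unfold inD
  rw [Finset.filter_insert]
  split
  · rw [Finset.card_insert_of_notMem (fun h => hd (Finset.mem_filter.1 h).1)]
    try simp_all
  · simp_all

lemma outD_erase (F : Finset (V × V)) (d : V × V) (hd : d ∈ F) (x : V) :
    outD (F.erase d) x + (if d.1 = x then 1 else 0) = outD F x := by
  unfold outD
  rw [Finset.filter_erase]
  split
  · rw [Finset.card_erase_of_mem (Finset.mem_filter.2 ⟨hd, by assumption⟩)]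
    have : 0 < (F.filter fun d' => d'.1 = x).card :=
      Finset.card_pos.2 ⟨d, Finset.mem_filter.2 ⟨hd, by assumption⟩⟩
    omega
  · rw [Finset.erase_eq_of_notMem (fun h => by simp_all [Finset.mem_filter])]
    simp_all

lemma inD_erase (F : Finset (V × V)) (d : V × V) (hd : d ∈ F) (x : V) :
    inD (F.erase d) x + (if d.2 = x then 1 else 0) = inD F x := by
  unfold inD
  rw [Finset.filter_erase]
  split
  · rw [Finset.card_erase_of_mem (Finset.mem_filter.2 ⟨hd, by assumption⟩)]
    have : 0 < (F.filter fun d' => d'.2 = x).card :=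
      Finset.card_pos.2 ⟨d, Finset.mem_filter.2 ⟨hd, by assumption⟩⟩
    omega
  · rw [Finset.erase_eq_of_notMem (fun h => by simp_all [Finset.mem_filter])]
    simp_all

/-- signed excess -/
noncomputable def ex (F : Finset (V × V)) (x : V) : ℤ := (outD F x : ℤ) - inD F x

/-- a "partial flow" structure: darts of `G`, no opposite darts. -/
structure Good (G : SimpleGraph V) (F : Finset (V × V)) : Prop where
  adj : ∀ d ∈ F, G.Adj d.1 d.2
  noOpp : ∀ d ∈ F, (d.2, d.1) ∉ F

/-- flow from u to v of value k -/
structure IsFlow (G : SimpleGraph V) (F : Finset (V × V)) (u v : V) (k : ℕ) : Prop where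
  good : Good G F
  ex_eq : ∀ x, ex F x = (if x = u then (k : ℤ) else 0) - (if x = v then (k : ℤ) else 0)

end EM

namespace EM
variable {V : Type*}

/-- residual arc -/
def Res (G : SimpleGraph V) (F : Finset (V × V)) (x y : V) : Prop :=
  G.Adj x y ∧ (x, y) ∉ F

lemma ex_update (F : Finset (V × V)) (x y : V) (hne : x ≠ y) (F' : Finset (V × V))
    (ho : ∀ z, (outD F' z : ℤ) = outD F z + (if z = x then 1 else 0) - (if z = y then 1 else 0) * 0
      ∨ True) : True := trivial

/-- one augmentation step -/
lemma augStep (G : SimpleGraph V) (F : Finset (V × V)) (x y : V)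
    (hxy : Res G F x y) (hg : Good G F) :
    ∃ F' : Finset (V × V), Good G F' ∧
      (∀ z, ex F' z = ex F z + (if z = x then 1 else 0) - (if z = y then 1 else 0)) ∧
      (∀ d : V × V, d.1 ≠ x → d.2 ≠ x → (d ∈ F' ↔ d ∈ F)) := by
  obtain ⟨hadj, hnm⟩ := hxy
  have hne : x ≠ y := hadj.ne
  by_cases hop : (y, x) ∈ F
  · refine ⟨F.erase (y, x), ⟨fun d hd => hg.adj d (Finset.mem_erase.1 hd).2,
      fun d hd => fun h => hg.noOpp d (Finset.mem_erase.1 hd).2 (Finset.mem_erase.1 h).2⟩,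
      fun z => ?_, fun d h1 h2 => ?_⟩
    · have ho := outD_erase F (y, x) hop z
      have hi := inD_erase F (y, x) hop z
      simp only [ex]
      simp only at ho hi
      rcases eq_or_ne z x with rfl | h1
      · rw [if_pos rfl, if_neg hne] at *
        try rw [if_neg (fun h : y = z => hne h.symm)] at ho
        try rw [if_pos rfl] at hi
        omega
      · rcases eq_or_ne z y with rfl | h2
        · rw [if_neg h1, if_pos rfl] at *
          try rw [if_pos rfl] at ho
          try rw [if_neg (fun h : x = z => h1 h.symm)] at hi
          omega
        · rw [if_neg h1, if_neg h2] at *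
          try rw [if_neg (fun h : y = z => h2 h.symm)] at ho
          try rw [if_neg (fun h : x = z => h1 h.symm)] at hi
          omega
    · constructor
      · exact fun h => (Finset.mem_erase.1 h).2
      · intro h
        refine Finset.mem_erase.2 ⟨fun he => h2 ?_, h⟩
        rw [he]
  · refine ⟨insert (x, y) F, ⟨?_, ?_⟩, fun z => ?_, fun d h1 h2 => ?_⟩
    · intro d hd
      rcases Finset.mem_insert.1 hd with h | h
      · rw [h]; exact hadj
      · exact hg.adj d h
    · intro d hd hmem
      rcases Finset.mem_insert.1 hd with h | h
      · subst h
        rcases Finset.mem_insert.1 hmem with h' | h'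
        · exact hne (congrArg Prod.snd h')
        · exact hop h'
      · rcases Finset.mem_insert.1 hmem with h' | h'
        · apply hop
          have hd1 : d.1 = y := congrArg Prod.snd h'
          have hd2 : d.2 = x := congrArg Prod.fst h'
          have : d = (y, x) := Prod.ext hd1 hd2
          rwa [this] at h
        · exact hg.noOpp d h h'
    · have ho := outD_insert F (x, y) hnm z
      have hi := inD_insert F (x, y) hnm z
      simp only [ex]
      simp only at ho hi
      rcases eq_or_ne z x with rfl | h1
      · rw [if_pos rfl, if_neg hne] at *
        try rw [if_pos rfl] at ho
        try rw [if_neg (fun h : y = z => hne h.symm)] at hi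
        omega
      · rcases eq_or_ne z y with rfl | h2
        · rw [if_neg h1, if_pos rfl] at *
          try rw [if_neg (fun h : x = z => h1 h.symm)] at ho
          try rw [if_pos rfl] at hi
          omega
        · rw [if_neg h1, if_neg h2] at *
          try rw [if_neg (fun h : x = z => h1 h.symm)] at ho
          try rw [if_neg (fun h : y = z => h2 h.symm)] at hi
          omega
    · constructor
      · intro h
        rcases Finset.mem_insert.1 h with h' | h'
        · exact absurd (congrArg Prod.fst h') h1
        · exact h'
      · exact fun h => Finset.mem_insert.2 (Or.inr h)

end EM


namespace EM
variable {α : Type*}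

/-- chain for `R` from `x` through `l`, ending at `w`. -/
def ChainTo (R : α → α → Prop) : α → List α → α → Prop
  | x, [], w => x = w
  | x, y :: l, w => R x y ∧ ChainTo R y l w

lemma ChainTo.imp_on : ∀ (l : List α) (x w : α) {R R' : α → α → Prop},
    ChainTo R x l w → (∀ a b, a ∈ x :: l → b ∈ x :: l → R a b → R' a b) →
    ChainTo R' x l w
  | [], _, _, _, _, h, _ => h
  | y :: l, x, w, R, R', h, himp =>
    ⟨himp x y (by simp) (by simp) h.1,
      ChainTo.imp_on l y w h.2 (fun a b ha hb => himp a b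
        (by rcases List.mem_cons.1 ha with h'|h' <;> simp [h'])
        (by rcases List.mem_cons.1 hb with h'|h' <;> simp [h']))⟩

lemma rtg_chainTo {R : α → α → Prop} {u v : α} (h : Relation.ReflTransGen R u v) :
    ∃ l : List α, ChainTo R u l v := by
  induction h using Relation.ReflTransGen.head_induction_on with
  | refl => exact ⟨[], rfl⟩
  | head hab _ ih =>
    obtain ⟨l, hc⟩ := ih
    exact ⟨_ :: l, hab, hc⟩

lemma ChainTo.append_cons : ∀ (l₁ : List α) {x y w : α} {l₂ : List α} {R : α → α → Prop},
    ChainTo R x (l₁ ++ y :: l₂) w → ChainTo R y l₂ w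
  | [], _, _, _, _, _, h => h.2
  | a :: l₁, _, _, _, _, _, h => ChainTo.append_cons l₁ h.2

/-- extract a nodup chain -/
lemma nodup_chainTo {R : α → α → Prop} {v : α} : ∀ (n : ℕ) (l : List α) (x : α), l.length ≤ n →
    ChainTo R x l v →
    ∃ l' : List α, ChainTo R x l' v ∧ (x :: l').Nodup ∧ ∀ a ∈ l', a ∈ l := by
  intro n
  induction n with
  | zero =>
    intro l x hlen hc
    rcases l with _ | ⟨y, l⟩
    · exact ⟨[], hc, by simp, by simp⟩
    · simp at hlen
  | succ n ih =>
    intro l x hlen hc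
    by_cases hx : x ∈ l
    · obtain ⟨l₁, l₂, rfl⟩ := List.append_of_mem hx
      have hc₂ : ChainTo R x l₂ v := ChainTo.append_cons l₁ hc
      have hlen₂ : l₂.length ≤ n := by simp at hlen; omega
      obtain ⟨l', h1, h3, h4⟩ := ih l₂ x hlen₂ hc₂
      exact ⟨l', h1, h3, fun a ha => by simp [h4 a ha]⟩
    · rcases l with _ | ⟨y, l⟩
      · exact ⟨[], hc, by simp, by simp⟩
      · obtain ⟨hxy, hcy⟩ := hc
        obtain ⟨l', h1, h3, h4⟩ := ih l y (by simp at hlen; omega) hcy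
        refine ⟨y :: l', ⟨hxy, h1⟩, ?_, ?_⟩
        · refine List.nodup_cons.2 ⟨?_, h3⟩
          intro hmem
          rcases List.mem_cons.1 hmem with rfl | hmem'
          · exact hx (by simp)
          · exact hx (by simp [h4 x hmem'])
        · intro a ha
          rcases List.mem_cons.1 ha with rfl | ha'
          · simp
          · simp [h4 a ha']

end EM

namespace EM
variable {V : Type*}

lemma augChain (G : SimpleGraph V) {v : V} : ∀ (l : List V) (x : V) (F : Finset (V × V)),
    ChainTo (Res G F) x l v → (x :: l).Nodup → Good G F →
    ∃ F', Good G F' ∧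
      ∀ z, ex F' z = ex F z + (if z = x then 1 else 0) - (if z = v then 1 else 0) := by
  intro l
  induction l with
  | nil =>
    intro x F hc _ hg
    have hx : x = v := hc
    exact ⟨F, hg, fun z => by subst hx; ring⟩
  | cons y l ih =>
    intro x F hc hnd hg
    obtain ⟨hxy, hcy⟩ := hc
    obtain ⟨F1, hg1, hex1, hpres⟩ := augStep G F x y hxy hg
    have hxnot : x ∉ y :: l := (List.nodup_cons.1 hnd).1
    have hcy1 : ChainTo (Res G F1) y l v := by
      refine ChainTo.imp_on l y v hcy (fun a b ha hb hr => ⟨hr.1, fun hmem => hr.2 ?_⟩)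
      rw [← hpres (a, b) (fun h => hxnot (h ▸ ha)) (fun h => hxnot (h ▸ hb))]
      exact hmem
    obtain ⟨F2, hg2, hex2⟩ := ih y F1 hcy1 (List.nodup_cons.1 hnd).2 hg1
    refine ⟨F2, hg2, fun z => ?_⟩
    rw [hex2 z, hex1 z]; ring

lemma card_filter_split {β : Type*} (s : Finset β) (p q : β → Prop) :
    (s.filter p).card
      = (s.filter fun d => p d ∧ q d).card + (s.filter fun d => p d ∧ ¬ q d).card := by
  rw [← Finset.filter_filter, ← Finset.filter_filter]
  exact (Finset.card_filter_add_card_filter_not (s := s.filter p) (p := q)).symm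

variable [Fintype V]

lemma sum_outD (F : Finset (V × V)) (A : Set V) :
    ∑ x ∈ A.toFinset, outD F x = (F.filter fun d => d.1 ∈ A).card := by
  have hfib := Finset.card_eq_sum_card_fiberwise (s := F.filter fun d => d.1 ∈ A)
    (t := A.toFinset) (f := fun d => d.1)
    (fun d hd => Set.mem_toFinset.2 (Finset.mem_filter.1 hd).2)
  rw [hfib]
  refine Finset.sum_congr rfl fun x hx => ?_
  unfold outD
  congr 1
  ext d
  simp only [Finset.mem_filter]
  constructor
  · rintro ⟨hdF, hdx⟩; exact ⟨⟨hdF, hdx ▸ Set.mem_toFinset.1 hx⟩, hdx⟩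
  · rintro ⟨⟨hdF, _⟩, hdx⟩; exact ⟨hdF, hdx⟩

lemma sum_inD (F : Finset (V × V)) (A : Set V) :
    ∑ x ∈ A.toFinset, inD F x = (F.filter fun d => d.2 ∈ A).card := by
  have hfib := Finset.card_eq_sum_card_fiberwise (s := F.filter fun d => d.2 ∈ A)
    (t := A.toFinset) (f := fun d => d.2)
    (fun d hd => Set.mem_toFinset.2 (Finset.mem_filter.1 hd).2)
  rw [hfib]
  refine Finset.sum_congr rfl fun x hx => ?_
  unfold inD
  congr 1
  ext d
  simp only [Finset.mem_filter]
  constructor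
  · rintro ⟨hdF, hdx⟩; exact ⟨⟨hdF, hdx ▸ Set.mem_toFinset.1 hx⟩, hdx⟩
  · rintro ⟨⟨hdF, _⟩, hdx⟩; exact ⟨hdF, hdx⟩

lemma sum_ex (F : Finset (V × V)) (A : Set V) :
    ∑ x ∈ A.toFinset, ex F x
      = ((F.filter fun d => d.1 ∈ A ∧ d.2 ∉ A).card : ℤ)
        - ((F.filter fun d => d.1 ∉ A ∧ d.2 ∈ A).card : ℤ) := by
  unfold ex
  rw [Finset.sum_sub_distrib]
  have h1 : ∑ x ∈ A.toFinset, (outD F x : ℤ) = ((F.filter fun d => d.1 ∈ A).card : ℤ) := by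
    exact_mod_cast sum_outD F A
  have h2 : ∑ x ∈ A.toFinset, (inD F x : ℤ) = ((F.filter fun d => d.2 ∈ A).card : ℤ) := by
    exact_mod_cast sum_inD F A
  rw [h1, h2]
  have h3 := card_filter_split F (fun d => d.1 ∈ A) (fun d => d.2 ∈ A)
  have h4 := card_filter_split F (fun d => d.2 ∈ A) (fun d => d.1 ∈ A)
  have h5 : (F.filter fun d => d.2 ∈ A ∧ d.1 ∈ A) = F.filter fun d => d.1 ∈ A ∧ d.2 ∈ A := by
    apply Finset.filter_congr; intro d _; exact and_comm
  have h6 : (F.filter fun d => d.2 ∈ A ∧ d.1 ∉ A) = F.filter fun d => d.1 ∉ A ∧ d.2 ∈ A := by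
    apply Finset.filter_congr; intro d _; exact and_comm
  rw [h5, h6] at h4
  omega

end EM

namespace EM
variable {V : Type*} [Fintype V]

lemma exists_flow (G : SimpleGraph V) (u v : V) (huv : u ≠ v) :
    ∀ c : ℕ, (∀ A : Set V, u ∈ A → v ∉ A → c ≤ (cutEdges G A).ncard) →
    ∃ F, IsFlow G F u v c := by
  intro c
  induction c with
  | zero =>
    intro _
    refine ⟨∅, ⟨⟨fun d hd => absurd hd (Finset.notMem_empty d),
      fun d hd => absurd hd (Finset.notMem_empty d)⟩, fun x => ?_⟩⟩
    simp [ex, outD, inD]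
  | succ c ih =>
    intro hsep
    obtain ⟨F, hF⟩ := ih (fun A hu hv => le_trans (Nat.le_succ c) (hsep A hu hv))
    set A : Set V := {x | Relation.ReflTransGen (Res G F) u x} with hA
    have huA : u ∈ A := Relation.ReflTransGen.refl
    have hvA : v ∈ A := by
      by_contra hvA
      -- no backward darts
      have hback : (F.filter fun d => d.1 ∉ A ∧ d.2 ∈ A) = ∅ := by
        rw [Finset.filter_eq_empty_iff]
        rintro d hd ⟨h1, h2⟩
        apply h1
        exact Relation.ReflTransGen.tail h2
          ⟨(hF.good.adj d hd).symm, hF.good.noOpp d hd⟩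
      -- every crossing edge is a forward dart
      have hcross : ∀ a b : V, G.Adj a b → a ∈ A → b ∉ A → (a, b) ∈ F := by
        intro a b hab ha hb
        by_contra hmem
        exact hb (Relation.ReflTransGen.tail ha ⟨hab, hmem⟩)
      -- the cut is contained in the image of S
      have hsub : cutEdges G A ⊆ (fun d : V × V => s(d.1, d.2)) ''
          ↑(F.filter fun d => d.1 ∈ A ∧ d.2 ∉ A) := by
        rintro e ⟨heE, a, b, rfl, ha, hb⟩
        refine ⟨(a, b), ?_, rfl⟩
        simp only [Finset.coe_filter, Set.mem_setOf_eq]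
        exact ⟨hcross a b ((SimpleGraph.mem_edgeSet G).1 heE) ha hb, ha, hb⟩
      have hS : ((F.filter fun d => d.1 ∈ A ∧ d.2 ∉ A).card : ℤ) = c := by
        have := sum_ex F A
        rw [hback] at this
        have hsum : ∑ x ∈ A.toFinset, ex F x = (c : ℤ) := by
          have : ∀ x ∈ A.toFinset, ex F x
              = (if x = u then (c : ℤ) else 0) - (if x = v then (c : ℤ) else 0) :=
            fun x _ => hF.ex_eq x
          rw [Finset.sum_congr rfl this, Finset.sum_sub_distrib]
          rw [Finset.sum_ite_eq' A.toFinset u fun _ => (c : ℤ),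
            Finset.sum_ite_eq' A.toFinset v fun _ => (c : ℤ)]
          simp [Set.mem_toFinset, huA, hvA]
        rw [hsum] at this
        simp only [Finset.card_empty, Nat.cast_zero, sub_zero] at this
        omega
      have hle : (cutEdges G A).ncard ≤ c := by
        calc (cutEdges G A).ncard
            ≤ ((fun d : V × V => s(d.1, d.2)) ''
                ↑(F.filter fun d => d.1 ∈ A ∧ d.2 ∉ A)).ncard :=
              Set.ncard_le_ncard hsub (Set.toFinite _)
          _ ≤ (↑(F.filter fun d => d.1 ∈ A ∧ d.2 ∉ A) : Set (V × V)).ncard :=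
              Set.ncard_image_le (Set.toFinite _)
          _ = (F.filter fun d => d.1 ∈ A ∧ d.2 ∉ A).card := Set.ncard_coe_finset _
          _ ≤ c := by omega
      exact absurd (hsep A huA hvA) (by omega)
    -- augment
    obtain ⟨l, hl⟩ := rtg_chainTo hvA
    obtain ⟨l', hc', hnd, _⟩ := nodup_chainTo l.length l u le_rfl hl
    obtain ⟨F', hg', hex'⟩ := augChain G l' u F hc' hnd hF.good
    refine ⟨F', hg', fun z => ?_⟩
    rw [hex' z, hF.ex_eq z]
    push_cast
    split_ifs <;> omega

end EM

namespace EM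
variable {V : Type*}

open SimpleGraph

lemma walk_count (G : SimpleGraph V) {a b : V} (w : G.Walk a b) (x : V) :
    ((w.darts.map Dart.toProd).countP fun d => d.1 = x) + (if x = b then 1 else 0)
      = ((w.darts.map Dart.toProd).countP fun d => d.2 = x) + (if x = a then 1 else 0) := by
  induction w with
  | nil => simp
  | cons h p ih =>
    rename_i y
    rw [Walk.darts_cons]
    simp only [List.map_cons, List.countP_cons, decide_eq_true_eq]
    by_cases ha : x = a <;> by_cases hy : x = y <;> by_cases hb : x = b <;>
      subst_vars <;> simp_all [eq_comm] <;> omega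

lemma extract_walk (G : SimpleGraph V) (v : V) : ∀ (n : ℕ) (F : Finset (V × V)), F.card ≤ n →
    (∀ d ∈ F, G.Adj d.1 d.2) →
    (∀ y, y ≠ v → inD F y ≤ outD F y) →
    ∀ x, inD F x < outD F x →
    ∃ w : G.Walk x v, (w.darts.map Dart.toProd).Nodup ∧
      ∀ d ∈ w.darts.map Dart.toProd, d ∈ F := by
  classical
  intro n
  induction n with
  | zero =>
    intro F hcard _ _ x hx
    have : outD F x ≤ F.card := Finset.card_le_card (Finset.filter_subset _ _)
    omega
  | succ n ih =>
    intro F hcard hadj hbal x hx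
    have hne : (F.filter fun d => d.1 = x).Nonempty := by
      rw [← Finset.card_pos]
      change 0 < outD F x
      omega
    obtain ⟨d, hd⟩ := hne
    obtain ⟨hdF, hdx⟩ := Finset.mem_filter.1 hd
    obtain ⟨x', z⟩ := d
    simp only at hdx
    subst hdx
    have hadjxz : G.Adj x' z := hadj (x', z) hdF
    by_cases hz : z = v
    · subst hz
      refine ⟨Walk.cons hadjxz Walk.nil, by simp, ?_⟩
      intro d hd'
      simp [Walk.darts_cons] at hd'
      rw [hd']
      exact hdF
    · have hcard' : (F.erase (x', z)).card ≤ n := by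
        have := Finset.card_erase_of_mem hdF
        omega
      have hadj' : ∀ d ∈ F.erase (x', z), G.Adj d.1 d.2 :=
        fun d hd' => hadj d (Finset.mem_erase.1 hd').2
      have hxz : x' ≠ z := hadjxz.ne
      have hinz : 1 ≤ inD F z := by
        have : (x', z) ∈ F.filter fun d => d.2 = z := Finset.mem_filter.2 ⟨hdF, rfl⟩
        have := Finset.card_pos.2 ⟨_, this⟩
        unfold inD; omega
      have hoz := outD_erase F (x', z) hdF
      have hiz := inD_erase F (x', z) hdF
      have hbal' : ∀ y, y ≠ v → inD (F.erase (x', z)) y ≤ outD (F.erase (x', z)) y := by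
        intro y hy
        have h1 := hoz y
        have h2 := hiz y
        rcases eq_or_ne y x' with rfl | hyx
        · rw [if_pos rfl] at h1
          rw [if_neg (fun h : z = y => hxz h.symm)] at h2
          omega
        · rw [if_neg (fun h : x' = y => hyx h.symm)] at h1
          rcases eq_or_ne y z with rfl | hyz
          · rw [if_pos rfl] at h2
            have := hbal y hy
            omega
          · rw [if_neg (fun h : z = y => hyz h.symm)] at h2
            have := hbal y hy
            omega
      have hxz' : inD (F.erase (x', z)) z < outD (F.erase (x', z)) z := by
        have h1 := hoz z
        have h2 := hiz z
        rw [if_neg hxz] at h1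
        rw [if_pos rfl] at h2
        have := hbal z hz
        omega
      obtain ⟨w', hnd, hsub⟩ := ih (F.erase (x', z)) hcard' hadj' hbal' z hxz'
      refine ⟨Walk.cons hadjxz w', ?_, ?_⟩
      · rw [Walk.darts_cons]
        simp only [List.map_cons]
        refine List.nodup_cons.2 ⟨?_, hnd⟩
        intro hmem
        have := hsub _ hmem
        exact (Finset.mem_erase.1 this).1 rfl
      · intro d hd'
        rw [Walk.darts_cons] at hd'
        simp only [List.map_cons, List.mem_cons] at hd'
        rcases hd' with rfl | hd'
        · exact hdF
        · exact (Finset.mem_erase.1 (hsub d hd')).2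

end EM

namespace EM
variable {V : Type*}
open SimpleGraph

lemma outD_mono {F S : Finset (V × V)} (h : S ⊆ F) (x : V) : outD S x ≤ outD F x :=
  Finset.card_le_card (Finset.filter_subset_filter _ h)

lemma inD_mono {F S : Finset (V × V)} (h : S ⊆ F) (x : V) : inD S x ≤ inD F x :=
  Finset.card_le_card (Finset.filter_subset_filter _ h)

lemma outD_sdiff (F S : Finset (V × V)) (h : S ⊆ F) (x : V) :
    outD (F \ S) x = outD F x - outD S x := by
  unfold outD
  have : (F \ S).filter (fun d => d.1 = x) = F.filter (fun d => d.1 = x) \ S.filter (fun d => d.1 = x) := by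
    ext d; simp [Finset.mem_filter, Finset.mem_sdiff]; tauto
  rw [this, Finset.card_sdiff_of_subset (Finset.filter_subset_filter _ h)]

lemma inD_sdiff (F S : Finset (V × V)) (h : S ⊆ F) (x : V) :
    inD (F \ S) x = inD F x - inD S x := by
  unfold inD
  have : (F \ S).filter (fun d => d.2 = x) = F.filter (fun d => d.2 = x) \ S.filter (fun d => d.2 = x) := by
    ext d; simp [Finset.mem_filter, Finset.mem_sdiff]; tauto
  rw [this, Finset.card_sdiff_of_subset (Finset.filter_subset_filter _ h)]

lemma outD_toFinset (l : List (V × V)) (hnd : l.Nodup) (x : V) :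
    outD l.toFinset x = l.countP (fun d => d.1 = x) := by
  classical
  unfold outD
  have h : (l.toFinset.filter fun d => d.1 = x) = (l.filter fun d => d.1 = x).toFinset := by
    ext d; simp [List.mem_filter]
  rw [h, List.card_toFinset, List.Nodup.dedup (hnd.filter _), List.countP_eq_length_filter]

lemma inD_toFinset (l : List (V × V)) (hnd : l.Nodup) (x : V) :
    inD l.toFinset x = l.countP (fun d => d.2 = x) := by
  classical
  unfold inD
  have h : (l.toFinset.filter fun d => d.2 = x) = (l.filter fun d => d.2 = x).toFinset := by
    ext d; simp [List.mem_filter]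
  rw [h, List.card_toFinset, List.Nodup.dedup (hnd.filter _), List.countP_eq_length_filter]

lemma flow_sub_walk (G : SimpleGraph V) {u v : V} {c : ℕ} (huv : u ≠ v) {F : Finset (V × V)}
    (hF : IsFlow G F u v (c + 1)) (w : G.Walk u v)
    (hnd : (w.darts.map Dart.toProd).Nodup)
    (hsub : ∀ d ∈ w.darts.map Dart.toProd, d ∈ F) :
    IsFlow G (F \ (w.darts.map Dart.toProd).toFinset) u v c := by
  classical
  set dl := w.darts.map Dart.toProd with hdl
  have hSsub : dl.toFinset ⊆ F := fun d hd => hsub d (List.mem_toFinset.1 hd)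
  refine ⟨⟨fun d hd => hF.good.adj d (Finset.mem_sdiff.1 hd).1,
    fun d hd h => hF.good.noOpp d (Finset.mem_sdiff.1 hd).1 (Finset.mem_sdiff.1 h).1⟩,
    fun x => ?_⟩
  have ho := outD_sdiff F dl.toFinset hSsub x
  have hi := inD_sdiff F dl.toFinset hSsub x
  have hom := outD_mono hSsub x
  have him := inD_mono hSsub x
  have hcnt := walk_count G w x
  rw [← hdl] at hcnt
  rw [outD_toFinset dl hnd x] at ho hom
  rw [inD_toFinset dl hnd x] at hi him
  have hex := hF.ex_eq x
  unfold ex at hex ⊢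
  rw [ho, hi]
  rcases eq_or_ne x u with rfl | h1
  · rw [if_pos rfl, if_neg huv] at *
    push_cast
    omega
  · rcases eq_or_ne x v with rfl | h2
    · rw [if_neg h1, if_pos rfl] at *
      push_cast
      omega
    · rw [if_neg h1, if_neg h2] at *
      push_cast
      omega

lemma decompose (G : SimpleGraph V) {u v : V} (huv : u ≠ v) :
    ∀ (c : ℕ) (F : Finset (V × V)), IsFlow G F u v c →
    ∃ P : Fin c → G.Walk u v,
      (∀ i, ∀ d ∈ (P i).darts.map Dart.toProd, d ∈ F) ∧
      (∀ i j : Fin c, i ≠ j → ∀ d ∈ (P i).darts.map Dart.toProd,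
        d ∉ (P j).darts.map Dart.toProd) := by
  classical
  intro c
  induction c with
  | zero => exact fun F _ => ⟨Fin.elim0, fun i => i.elim0, fun i => i.elim0⟩
  | succ c ih =>
    intro F hF
    have hbal : ∀ y, y ≠ v → inD F y ≤ outD F y := by
      intro y hy
      have := hF.ex_eq y
      unfold ex at this
      rcases eq_or_ne y u with rfl | h1
      · rw [if_pos rfl, if_neg huv] at this; omega
      · rw [if_neg h1, if_neg hy] at this; omega
    have hx : inD F u < outD F u := by
      have := hF.ex_eq u
      unfold ex at this
      rw [if_pos rfl, if_neg huv] at this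
      push_cast at this
      omega
    obtain ⟨w, hnd, hsub⟩ := extract_walk G v F.card F le_rfl hF.good.adj hbal u hx
    have hF' := flow_sub_walk G huv hF w hnd hsub
    obtain ⟨P, hPsub, hPdisj⟩ := ih _ hF'
    refine ⟨Fin.cons w P, ?_, ?_⟩
    · intro i
      refine Fin.cases ?_ ?_ i
      · simpa using fun d hd => hsub d hd
      · intro j
        simp only [Fin.cons_succ]
        exact fun d hd => (Finset.mem_sdiff.1 (hPsub j d hd)).1
    · intro i j
      induction i using Fin.cases with
      | zero =>
        induction j using Fin.cases with
        | zero => intro hij; exact absurd rfl hij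
        | succ j' =>
          intro _ d hd hd'
          simp only [Fin.cons_zero, Fin.cons_succ] at hd hd'
          exact (Finset.mem_sdiff.1 (hPsub j' d hd')).2 (List.mem_toFinset.2 hd)
      | succ i' =>
        induction j using Fin.cases with
        | zero =>
          intro _ d hd hd'
          simp only [Fin.cons_zero, Fin.cons_succ] at hd hd'
          exact (Finset.mem_sdiff.1 (hPsub i' d hd)).2 (List.mem_toFinset.2 hd')
        | succ j' =>
          intro hij
          simp only [Fin.cons_succ]
          exact hPdisj i' j' (fun h => hij (by rw [h]))

end EM

namespace EM
variable {V : Type*}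
open SimpleGraph

lemma menger_hard [Fintype V] (G : SimpleGraph V) (u v : V) (huv : u ≠ v) (c : ℕ)
    (hsep : ∀ A : Set V, u ∈ A → v ∉ A → c ≤ (cutEdges G A).ncard) :
    CEdgeConnPair G c u v := by
  obtain ⟨F, hF⟩ := exists_flow G u v huv c hsep
  obtain ⟨P, hPsub, hPdisj⟩ := decompose G huv c F hF
  refine ⟨fun i => (P i).bypass, fun i => Walk.bypass_isPath _, fun i j hij e hei hej => ?_⟩
  have hei' := Walk.edges_bypass_subset _ hei
  have hej' := Walk.edges_bypass_subset _ hej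
  simp only [Walk.edges, List.mem_map] at hei' hej'
  obtain ⟨d, hd, rfl⟩ := hei'
  obtain ⟨d', hd', hde⟩ := hej'
  have : d'.toProd = d.toProd ∨ d'.toProd = d.toProd.swap := by
    rcases (SimpleGraph.dart_edge_eq_iff d' d).1 hde with h | h
    · exact Or.inl (congrArg Dart.toProd h)
    · exact Or.inr (congrArg Dart.toProd h)
  have hdF : d.toProd ∈ F := hPsub i _ (List.mem_map_of_mem hd)
  have hdF' : d'.toProd ∈ F := hPsub j _ (List.mem_map_of_mem hd')
  rcases this with h | h
  · exact hPdisj i j hij d.toProd (List.mem_map_of_mem hd)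
      (h ▸ List.mem_map_of_mem hd')
  · apply hF.good.noOpp d.toProd hdF
    have : (d.toProd.2, d.toProd.1) = d'.toProd := by
      rw [h]; rfl
    rw [this]
    exact hdF'

lemma walk_cross {G : SimpleGraph V} {A : Set V} : ∀ {a b : V} (w : G.Walk a b),
    a ∈ A → b ∉ A → ∃ e, e ∈ w.edges ∧ e ∈ cutEdges G A := by
  intro a b w
  induction w with
  | nil => intro h h'; exact absurd h h'
  | cons hadj p ih =>
    rename_i s t r
    intro hs hr
    by_cases ht : t ∈ A
    · obtain ⟨e, he, hc⟩ := ih ht hr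
      exact ⟨e, by simp [Walk.edges_cons, he], hc⟩
    · exact ⟨s(s, t), by simp [Walk.edges_cons],
        ⟨(SimpleGraph.mem_edgeSet G).2 hadj, s, t, rfl, hs, ht⟩⟩

lemma paths_sep [Fintype V] {G : SimpleGraph V} {u v : V} {c : ℕ}
    (h : CEdgeConnPair G c u v) :
    ∀ A : Set V, u ∈ A → v ∉ A → c ≤ (cutEdges G A).ncard := by
  classical
  intro A hu hv
  obtain ⟨P, _, hdisj⟩ := h
  have hcr : ∀ i : Fin c, ∃ e, e ∈ (P i).edges ∧ e ∈ cutEdges G A :=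
    fun i => walk_cross (P i) hu hv
  choose f hf1 hf2 using hcr
  have hinj : Function.Injective (fun i => (⟨f i, hf2 i⟩ : cutEdges G A)) := by
    intro i j hij
    by_contra hne
    have : f i = f j := congrArg Subtype.val hij
    exact hdisj i j hne (f i) (hf1 i) (this ▸ hf1 j)
  have := Nat.card_le_card_of_injective _ hinj
  rwa [Nat.card_eq_fintype_card (α := Fin c), Fintype.card_fin,
    Nat.card_coe_set_eq] at this

end EM

namespace EM
variable {V : Type*} [Fintype V]
open SimpleGraph

lemma nil_pair (G : SimpleGraph V) (c : ℕ) (u : V) : CEdgeConnPair G c u u :=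
  ⟨fun _ => Walk.nil, fun _ => Walk.IsPath.nil, fun i j _ e he => by simp at he⟩

lemma cut_mono {G₁ G₂ : SimpleGraph V} (h : G₁ ≤ G₂) (A : Set V) :
    cutEdges G₁ A ⊆ cutEdges G₂ A := by
  rintro e ⟨he, a, b, rfl, ha, hb⟩
  exact ⟨SimpleGraph.edgeSet_mono h he, a, b, rfl, ha, hb⟩

lemma sep_transfer (G G' H : SimpleGraph V) (hG' : G' ≤ G) (hH : H ≤ G') (c : ℕ)
    (hcomp : ∀ v : V, IsCEdgeConn (H.induce {w | H.Reachable v w}) c)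
    (hedge : ∀ u v : V, G'.Adj u v → H.Reachable u v)
    (A : Set V) (hcut : c ≤ (cutEdges G A).ncard) :
    c ≤ (cutEdges (H ⊔ SimpleGraph.fromEdgeSet (G.edgeSet \ G'.edgeSet)) A).ncard := by
  classical
  set D := SimpleGraph.fromEdgeSet (G.edgeSet \ G'.edgeSet) with hD
  by_cases hsplit : ∃ x ∈ A, ∃ y ∉ A, H.Reachable x y
  · obtain ⟨x, hx, y, hy, hxy⟩ := hsplit
    set K : Set V := {w | H.Reachable x w} with hK
    set A' : Set K := {z | (z : V) ∈ A} with hA'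
    have hne1 : A'.Nonempty := ⟨⟨x, show H.Reachable x x from SimpleGraph.Reachable.refl x⟩, hx⟩
    have hne2 : A'ᶜ.Nonempty := ⟨⟨y, hxy⟩, fun h => hy h⟩
    have hcut' := hcomp x A' hne1 hne2
    have hinj : Function.Injective (Sym2.map (Subtype.val : K → V)) :=
      Sym2.map.injective Subtype.val_injective
    have himg : Sym2.map (Subtype.val : K → V) '' cutEdges (H.induce K) A'
        ⊆ cutEdges (H ⊔ D) A := by
      rintro e ⟨e', ⟨heE, a, b, rfl, ha, hb⟩, rfl⟩
      have hadj : H.Adj ↑a ↑b := by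
        have := (SimpleGraph.mem_edgeSet (H.induce K)).1 heE
        simpa using this
      refine ⟨(H ⊔ D).mem_edgeSet.2 (Or.inl hadj), ↑a, ↑b, by simp, ha, hb⟩
    calc c ≤ (cutEdges (H.induce K) A').ncard := hcut'
      _ = (Sym2.map (Subtype.val : K → V) '' cutEdges (H.induce K) A').ncard :=
          (Set.ncard_image_of_injective _ hinj).symm
      _ ≤ (cutEdges (H ⊔ D) A).ncard := Set.ncard_le_ncard himg (Set.toFinite _)
  · refine le_trans hcut (Set.ncard_le_ncard ?_ (Set.toFinite _))
    rintro e ⟨he, a, b, rfl, ha, hb⟩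
    have hnadj : ¬ G'.Adj a b := by
      intro h
      exact hsplit ⟨a, ha, b, hb, hedge a b h⟩
    have hGadj : G.Adj a b := (G.mem_edgeSet).1 he
    refine ⟨(H ⊔ D).mem_edgeSet.2 (Or.inr ?_), a, b, rfl, ha, hb⟩
    rw [hD]
    exact (SimpleGraph.fromEdgeSet_adj _).2 ⟨⟨he, fun h => hnadj ((G'.mem_edgeSet).1 h)⟩, hGadj.ne⟩

lemma stmt5' (c : ℕ) (G G' H : SimpleGraph V) (hG' : G' ≤ G) (hH : H ≤ G')
    (hcomp : ∀ v : V, IsCEdgeConn (H.induce {w | H.Reachable v w}) c)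
    (hedge : ∀ u v : V, G'.Adj u v → H.Reachable u v) :
    ∀ u v : V,
      CEdgeConnPair G c u v ↔
        CEdgeConnPair (H ⊔ SimpleGraph.fromEdgeSet (G.edgeSet \ G'.edgeSet)) c u v := by
  intro u v
  set D := SimpleGraph.fromEdgeSet (G.edgeSet \ G'.edgeSet) with hD
  have hDG : D ≤ G := by
    intro a b hab
    rw [hD, SimpleGraph.fromEdgeSet_adj] at hab
    exact (G.mem_edgeSet).1 hab.1.1
  have hKG : H ⊔ D ≤ G := sup_le (le_trans hH hG') hDG
  rcases eq_or_ne u v with rfl | huv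
  · exact ⟨fun _ => nil_pair _ c u, fun _ => nil_pair _ c u⟩
  · constructor
    · intro h
      refine menger_hard (H ⊔ D) u v huv c (fun A hu hv => ?_)
      exact sep_transfer G G' H hG' hH c hcomp hedge A (paths_sep h A hu hv)
    · intro h
      refine menger_hard G u v huv c (fun A hu hv => ?_)
      exact le_trans (paths_sep h A hu hv)
        (Set.ncard_le_ncard (cut_mono hKG A) (Set.toFinite _))

end EM


/-- under the hypotheses of Statement 4, two vertices are
`c`-edge-connected (i.e. joined by `c` pairwise edge-disjoint paths) in `G` if and only
if they are `c`-edge-connected in `H ∪ D`. -/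
theorem stmt5 {V : Type*} [Fintype V] (c : ℕ) (hc : 0 < c)
    (G G' H : SimpleGraph V) (hG' : G' ≤ G) (hH : H ≤ G')
    (hcomp : ∀ v : V, IsCEdgeConn (H.induce {w | H.Reachable v w}) c)
    (hedge : ∀ u v : V, G'.Adj u v → H.Reachable u v) :
    ∀ u v : V,
      CEdgeConnPair G c u v ↔
        CEdgeConnPair (H ⊔ SimpleGraph.fromEdgeSet (G.edgeSet \ G'.edgeSet)) c u v := by
  intro u v
  exact EM.stmt5' c G G' H hG' hH hcomp hedge u v
end

section
/- Let G be a finite undirected graph and let C be a set of at least two vertices of G that is closed under the relation of 2-edge-connectivity (i.e., C is a 2-edge-connected class: every two vertices of C are 2-edge-connected in G, and no vertex outside C is 2-edge-connected in G to a vertex of C). Then the induced subgraph G[C] is 2-edge-connected; that is, G[C] is connected and has no cut consisting of a single edge. -/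
open SimpleGraph

/-! Take two edge-disjoint `u`–`v` paths for `u ∈ A`, `v ∉ A`. Every vertex on them is
2-edge-connected to `u`, so by closedness both paths lie in `C` and are paths of `G[C]`.
Each crosses the cut `(A, Aᶜ)`, and edge-disjointness makes the two crossing edges distinct. -/

namespace SimpleGraph

variable {V : Type*} {G : SimpleGraph V} {u v w : V}

lemma CEdgeConnPair.exists_two_paths (h : CEdgeConnPair G 2 u v) :
    ∃ p q : G.Walk u v, p.IsPath ∧ q.IsPath ∧ p.edges.Disjoint q.edges := by
  obtain ⟨P, hpath, hdisj⟩ := h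
  exact ⟨P 0, P 1, hpath 0, hpath 1, fun e h0 h1 => hdisj 0 1 (by decide) e h0 h1⟩

lemma cEdgeConnPair_two_of_disjoint (p q : G.Walk u v) (hpq : p.edges.Disjoint q.edges) :
    CEdgeConnPair G 2 u v := by
  classical
  refine ⟨![p.bypass, q.bypass], fun i => ?_, fun i j hij e hi hj => ?_⟩
  · fin_cases i
    exacts [p.bypass_isPath, q.bypass_isPath]
  · have hp := p.edges_bypass_subset_edges
    have hq := q.edges_bypass_subset_edges
    fin_cases i <;> fin_cases j
    · exact absurd rfl hij
    · exact hpq (hp hi) (hq hj)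
    · exact hpq (hp hj) (hq hi)
    · exact absurd rfl hij

/-- A vertex `w` on `p` is 2-edge-connected to `u`: one route is `p` up to `w`, the other
goes back along `q` and then forward along the rest of `p`. -/
lemma cEdgeConnPair_two_of_mem_support {p q : G.Walk u v} (hp : p.edges.Nodup)
    (hpq : p.edges.Disjoint q.edges) (hw : w ∈ p.support) : CEdgeConnPair G 2 u w := by
  classical
  refine cEdgeConnPair_two_of_disjoint (p.takeUntil w hw)
    ((p.dropUntil w hw).append q.reverse).reverse fun e htake hback => ?_
  have hsplit : (p.takeUntil w hw).edges.Disjoint (p.dropUntil w hw).edges := by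
    rw [← p.take_spec hw, Walk.edges_append] at hp
    exact List.disjoint_of_nodup_append hp
  simp only [Walk.edges_reverse, Walk.edges_append, List.mem_reverse, List.mem_append] at hback
  rcases hback with hdrop | hq
  · exact hsplit htake hdrop
  · exact hpq (p.edges_takeUntil_subset_edges hw htake) hq

lemma Walk.edges_induce_disjoint {s : Set V} {p q : G.Walk u v} (hp : ∀ x ∈ p.support, x ∈ s)
    (hq : ∀ x ∈ q.support, x ∈ s) (hpq : p.edges.Disjoint q.edges) :
    (p.induce s hp).edges.Disjoint (q.induce s hq).edges := by
  have hmap : ∀ (r : G.Walk u v) (hr : ∀ x ∈ r.support, x ∈ s) {e},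
      e ∈ (r.induce s hr).edges → Sym2.map Subtype.val e ∈ r.edges := fun r hr e he => by
    have hedges := congrArg Walk.edges (r.map_induce hr)
    rw [Walk.edges_map] at hedges
    exact hedges ▸ List.mem_map_of_mem he
  exact fun e he₁ he₂ => hpq (hmap p hp he₁) (hmap q hq he₂)

lemma Walk.exists_mem_cutEdges_mem_edges {A : Set V} (p : G.Walk u v) (hu : u ∈ A)
    (hv : v ∉ A) : ∃ e ∈ cutEdges G A, e ∈ p.edges := by
  obtain ⟨d, hd, hfst, hsnd⟩ := p.exists_boundary_dart A hu hv
  exact ⟨d.edge, ⟨d.edge_mem, d.fst, d.snd, rfl, hfst, hsnd⟩, List.mem_map_of_mem hd⟩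

lemma two_le_ncard_cutEdges [Finite V] {A : Set V} (p q : G.Walk u v)
    (hpq : p.edges.Disjoint q.edges) (hu : u ∈ A) (hv : v ∉ A) :
    2 ≤ (cutEdges G A).ncard := by
  obtain ⟨e, he, hep⟩ := p.exists_mem_cutEdges_mem_edges hu hv
  obtain ⟨f, hf, hfq⟩ := q.exists_mem_cutEdges_mem_edges hu hv
  have hef : e ≠ f := fun h => hpq hep (h ▸ hfq)
  exact (Set.one_lt_ncard (Set.toFinite _)).mpr ⟨e, he, f, hf, hef⟩

end SimpleGraph

theorem stmt8_general {V : Type*} [Fintype V] (G : SimpleGraph V) (C : Set V)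
    (hconn : ∀ u ∈ C, ∀ v ∈ C, CEdgeConnPair G 2 u v)
    (hclosed : ∀ u ∈ C, ∀ v : V, v ∉ C → ¬ CEdgeConnPair G 2 u v) :
    IsCEdgeConn (G.induce C) 2 := by
  rintro A ⟨u, hu⟩ ⟨v, hv⟩
  obtain ⟨p, q, hp, hq, hpq⟩ := (hconn u u.2 v v.2).exists_two_paths
  have hsupport {r s : G.Walk u v} (hr : r.IsPath) (hrs : r.edges.Disjoint s.edges) :
      ∀ x ∈ r.support, x ∈ C := fun x hx => by_contra fun hxC =>
    hclosed u u.2 x hxC (cEdgeConnPair_two_of_mem_support hr.edges_nodup hrs hx)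
  exact two_le_ncard_cutEdges _ _ (Walk.edges_induce_disjoint (hsupport hp hpq)
    (hsupport hq hpq.symm) hpq) hu hv

/-- if `C` is a set of at least two vertices that is a 2-edge-connected
class of `G` (every two vertices of `C` are 2-edge-connected in `G` and no vertex outside
`C` is 2-edge-connected to a vertex of `C`), then the induced subgraph `G[C]` is
2-edge-connected, i.e. it has no cut of size less than 2. -/
theorem stmt8 {V : Type*} [Fintype V] (G : SimpleGraph V) (C : Set V)
    (hcard : 2 ≤ C.ncard)
    (hconn : ∀ u ∈ C, ∀ v ∈ C, CEdgeConnPair G 2 u v)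
    (hclosed : ∀ u ∈ C, ∀ v : V, v ∉ C → ¬ CEdgeConnPair G 2 u v) :
    IsCEdgeConn (G.induce C) 2 :=
  stmt8_general G C hconn hclosed
end

section
/- Let c ≥ 3 be an integer and let G be the graph with vertex set {v_s, v_t, v_1, …, v_c} and edge set consisting of all edges {v_s, v_i} and {v_t, v_i} for 1 ≤ i ≤ c. Then every c-edge-connected component of G is a singleton, yet the vertices v_s and v_t are c-edge-connected in G (there exist c pairwise edge-disjoint paths from v_s to v_t). -/
open SimpleGraph

/-- Auxiliary: a set inducing a `c`-edge-connected subgraph has at most one vertex. -/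
theorem stmt9_aux (c : ℕ) (hc : 3 ≤ c) (G : SimpleGraph (Bool ⊕ Fin c))
    (hG : ∀ x y : Bool ⊕ Fin c, G.Adj x y ↔
      ((x.isLeft = true ∧ y.isRight = true) ∨ (x.isRight = true ∧ y.isLeft = true)))
    (C : Set (Bool ⊕ Fin c)) (hconn : IsCEdgeConn (G.induce C) c)
    {u v : Bool ⊕ Fin c} (hu : u ∈ C) (hv : v ∈ C) (huv : u ≠ v) : False := by
  by_cases h : ∃ i : Fin c, (Sum.inr i : Bool ⊕ Fin c) ∈ C
  · obtain ⟨i, hi⟩ := h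
    set a : C := ⟨Sum.inr i, hi⟩ with ha
    have hA : ({a} : Set C).Nonempty := ⟨a, rfl⟩
    have hAc : (({a} : Set C)ᶜ).Nonempty := by
      rcases eq_or_ne u (Sum.inr i) with rfl | hne
      · refine ⟨⟨v, hv⟩, ?_⟩
        simp only [Set.mem_compl_iff, Set.mem_singleton_iff, ha, Subtype.ext_iff]
        exact fun hh => huv hh.symm
      · refine ⟨⟨u, hu⟩, ?_⟩
        simp only [Set.mem_compl_iff, Set.mem_singleton_iff, ha, Subtype.ext_iff]
        exact hne
    have hle := hconn {a} hA hAc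
    have hsub : cutEdges (G.induce C) {a} ⊆
        (fun x : C => s(a, x)) '' {x : C | (x : Bool ⊕ Fin c).isLeft = true} := by
      rintro e ⟨he, p, q, rfl, hp, hq⟩
      have hp' : p = a := hp
      have hadj : (G.induce C).Adj p q := he
      rw [hp'] at hadj
      have hadj' : G.Adj (Sum.inr i) (q : Bool ⊕ Fin c) := hadj
      rw [hG] at hadj'
      simp only [Sum.isLeft_inr, Sum.isRight_inr, Bool.false_eq_true, false_and, true_and,
        false_or] at hadj'
      exact ⟨q, hadj', by rw [hp']⟩
    have h1 : (cutEdges (G.induce C) {a}).ncard ≤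
        ({x : C | (x : Bool ⊕ Fin c).isLeft = true}).ncard := by
      calc (cutEdges (G.induce C) {a}).ncard
          ≤ ((fun x : C => s(a, x)) '' {x : C | (x : Bool ⊕ Fin c).isLeft = true}).ncard :=
            Set.ncard_le_ncard hsub (Set.toFinite _)
        _ ≤ _ := Set.ncard_image_le (Set.toFinite _)
    have h2 : ({x : C | (x : Bool ⊕ Fin c).isLeft = true}).ncard ≤ 2 := by
      have heq : ({x : C | (x : Bool ⊕ Fin c).isLeft = true}).ncard =
          (Subtype.val '' {x : C | (x : Bool ⊕ Fin c).isLeft = true}).ncard :=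
        (Set.ncard_image_of_injective _ Subtype.val_injective).symm
      rw [heq]
      have hsub2 : Subtype.val '' {x : C | (x : Bool ⊕ Fin c).isLeft = true} ⊆
          ({Sum.inl false, Sum.inl true} : Set (Bool ⊕ Fin c)) := by
        rintro _ ⟨x, hx, rfl⟩
        simp only [Set.mem_setOf_eq] at hx
        rcases hxv : (x : Bool ⊕ Fin c) with b | j
        · cases b <;> simp
        · rw [hxv] at hx; simp at hx
      calc (Subtype.val '' {x : C | (x : Bool ⊕ Fin c).isLeft = true}).ncard
          ≤ ({Sum.inl false, Sum.inl true} : Set (Bool ⊕ Fin c)).ncard :=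
            Set.ncard_le_ncard hsub2 (Set.toFinite _)
        _ ≤ 2 := by
            refine le_trans (Set.ncard_insert_le _ _) ?_
            simp
    omega
  · push_neg at h
    set a : C := ⟨u, hu⟩ with ha
    have hA : ({a} : Set C).Nonempty := ⟨a, rfl⟩
    have hAc : (({a} : Set C)ᶜ).Nonempty := by
      refine ⟨⟨v, hv⟩, ?_⟩
      simp only [Set.mem_compl_iff, Set.mem_singleton_iff, ha, Subtype.ext_iff]
      exact fun hh => huv hh.symm
    have hleft : ∀ x : C, (x : Bool ⊕ Fin c).isRight = false := by
      rintro ⟨x, hx⟩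
      rcases x with b | j
      · rfl
      · exact absurd hx (h j)
    have hempty : cutEdges (G.induce C) {a} = ∅ := by
      ext e
      simp only [cutEdges, Set.mem_setOf_eq, Set.mem_empty_iff_false, iff_false, not_and]
      rintro he ⟨p, q, rfl, hp, hq⟩
      have hadj : (G.induce C).Adj p q := he
      have hadj' : G.Adj (p : Bool ⊕ Fin c) (q : Bool ⊕ Fin c) := hadj
      rw [hG] at hadj'
      rcases hadj' with ⟨_, hr⟩ | ⟨hr, _⟩
      · rw [hleft q] at hr; exact Bool.false_ne_true hr
      · rw [hleft p] at hr; exact Bool.false_ne_true hr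
    have hle := hconn {a} hA hAc
    rw [hempty, Set.ncard_empty] at hle
    omega

/-- for `c ≥ 3`, in the graph on vertices `v_s, v_t, v_1, …, v_c` (here
`v_s = Sum.inl false`, `v_t = Sum.inl true`, `v_i = Sum.inr i`) whose edges are exactly
all `{v_s, v_i}` and `{v_t, v_i}`, every `c`-edge-connected component is a singleton, yet
`v_s` and `v_t` are `c`-edge-connected (joined by `c` pairwise edge-disjoint paths). -/
theorem stmt9 (c : ℕ) (hc : 3 ≤ c) (G : SimpleGraph (Bool ⊕ Fin c))
    (hG : ∀ x y : Bool ⊕ Fin c, G.Adj x y ↔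
      ((x.isLeft = true ∧ y.isRight = true) ∨ (x.isRight = true ∧ y.isLeft = true))) :
    (∀ C : Set (Bool ⊕ Fin c), IsCComp G c C → ∃ v, C = {v}) ∧
      CEdgeConnPair G c (Sum.inl false) (Sum.inl true) := by
  constructor
  · rintro C ⟨⟨w, hw⟩, hconn, -⟩
    refine ⟨w, ?_⟩
    ext x
    simp only [Set.mem_singleton_iff]
    constructor
    · intro hx
      by_contra hxw
      exact stmt9_aux c hc G hG C hconn hx hw hxw
    · rintro rfl; exact hw
  · refine ⟨fun i => Walk.cons
      (show G.Adj (Sum.inl false) (Sum.inr i) from (hG _ _).mpr (Or.inl ⟨rfl, rfl⟩))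
      (Walk.cons (show G.Adj (Sum.inr i) (Sum.inl true) from (hG _ _).mpr (Or.inr ⟨rfl, rfl⟩))
        Walk.nil), fun i => ?_, ?_⟩
    · simp [Walk.isPath_def]
    · intro i j hij e he hej
      simp only [Walk.edges_cons, Walk.edges_nil, List.mem_cons, List.not_mem_nil,
        or_false] at he hej
      apply hij
      rcases he with rfl | rfl <;> rcases hej with hh | hh <;>
        simp_all [Sym2.eq_iff]
end
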